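/- arXiv:2203.10655 — 8 statements merged into one kernel-verified Lean document; each statement's English description precedes it below -/
import Mathlib

section
/- There is no Borel measurable function S : (ℕ → Bool) → ℝ such that for all f, g : ℕ → Bool, f E₀ g if and only if S f = S g. In other words, E₀ is not Borel reducible to the equality relation on ℝ (E₀ is not smooth). -/
/-!
An `E₀`-invariant Borel set of sequences is a tail event of the coordinate process, so by
Kolmogorov's 0-1 law it has measure `0` or `1` under the coin-flipping measure. Hence an
`E₀`-invariant Borel map into `ℝ` is almost surely constant and one of its fibres has full
measure. A reduction of `E₀` to equality would make that fibre a single `E₀`-class, which is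
countable and therefore null.
-/

open MeasureTheory ProbabilityTheory Filter Set
open scoped ENNReal

/-- The equivalence relation `E₀` on Cantor space: eventual equality. -/
def E0 (f g : ℕ → Bool) : Prop := ∃ N : ℕ, ∀ n : ℕ, N ≤ n → f n = g n

section TailInvariant

variable {β : Type*} [MeasurableSpace β]

theorem measurableSet_limsup_comap_eval_of_invariant {A : Set (ℕ → β)} (hA : MeasurableSet A)
    (hinv : ∀ f g : ℕ → β, (∀ᶠ n in atTop, f n = g n) → f ∈ A → g ∈ A) :
    MeasurableSet[limsup (fun n ↦ MeasurableSpace.comap (fun f : ℕ → β ↦ f n) ‹_›) atTop] A := by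
  rw [limsup_eq_iInf_iSup_of_nat, MeasurableSpace.measurableSet_iInf]
  intro n
  -- `f ↦ f ∘ (max · n)` reads only the coordinates `≥ n` and does not leave the class of `f`.
  have hA_eq : (fun f i ↦ f (max i n)) ⁻¹' A = A := by
    ext f
    have hf : ∀ᶠ i in atTop, f (max i n) = f i :=
      (eventually_ge_atTop n).mono fun i hi ↦ by rw [max_eq_left hi]
    exact ⟨hinv _ _ hf, hinv _ _ (hf.mono fun _ ↦ Eq.symm)⟩
  have h_meas : Measurable[⨆ j ≥ n, MeasurableSpace.comap (fun f : ℕ → β ↦ f j) ‹_›]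
      (fun f i ↦ f (max i n)) :=
    @measurable_pi_lambda _ _ _ (_) _ _ fun i ↦ Measurable.of_comap_le <|
      le_iSup₂ (f := fun j (_ : j ≥ n) ↦ MeasurableSpace.comap (fun f : ℕ → β ↦ f j) ‹_›)
        (max i n) (le_max_right i n)
  rw [← hA_eq]
  exact h_meas hA

variable {P : ℕ → Measure β} [∀ i, IsProbabilityMeasure (P i)]

theorem infinitePi_eq_zero_or_one_of_invariant {A : Set (ℕ → β)} (hA : MeasurableSet A)
    (hinv : ∀ f g : ℕ → β, (∀ᶠ n in atTop, f n = g n) → f ∈ A → g ∈ A) :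
    Measure.infinitePi P A = 0 ∨ Measure.infinitePi P A = 1 :=
  measure_zero_or_one_of_measurableSet_limsup_atTop (fun n ↦ (measurable_pi_apply n).comap_le)
    ((iIndepFun_iff_iIndep _ _ _).1 (iIndepFun_infinitePi (X := fun _ ↦ id) fun _ ↦ measurable_id))
    (measurableSet_limsup_comap_eval_of_invariant hA hinv)

theorem exists_ae_eq_const_of_invariant {Y : Type*} [MeasurableSpace Y] [Nonempty Y]
    [MeasurableSpace.CountablySeparated Y] {S : (ℕ → β) → Y} (hS : Measurable S)
    (hinv : ∀ f g : ℕ → β, (∀ᶠ n in atTop, f n = g n) → S f = S g) :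
    ∃ c, S =ᵐ[Measure.infinitePi P] Function.const _ c := by
  refine exists_eventuallyEq_const_of_forall_separating MeasurableSet fun U hU ↦ ?_
  have hSU := hS hU
  rcases infinitePi_eq_zero_or_one_of_invariant (P := P) hSU
    (fun f g hfg hf ↦ by rwa [mem_preimage, ← hinv f g hfg]) with h | h
  · exact .inr (measure_eq_zero_iff_ae_notMem.1 h)
  · exact .inl ((ae_iff_measure_eq hSU.nullMeasurableSet).2 (by rw [measure_univ]; exact h))

end TailInvariant

theorem Set.countable_setOf_eventuallyEq {β : Type*} [Countable β] (f : ℕ → β) :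
    {g : ℕ → β | ∀ᶠ n in atTop, g n = f n}.Countable := by
  have hsub : {g : ℕ → β | ∀ᶠ n in atTop, g n = f n} ⊆
      ⋃ N, range fun v : Fin N → β ↦ fun n ↦ if h : n < N then v ⟨n, h⟩ else f n := by
    intro g hg
    obtain ⟨N, hN⟩ := eventually_atTop.1 hg
    refine mem_iUnion.2 ⟨N, fun i ↦ g i, funext fun n ↦ ?_⟩
    dsimp only
    split_ifs with h
    · rfl
    · exact (hN n (not_lt.1 h)).symm
  exact (countable_iUnion fun N ↦ countable_range _).mono hsub

theorem nullSingletonClass_infinitePi_of_le {β : ℕ → Type*} [∀ i, MeasurableSpace (β i)]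
    [∀ i, MeasurableSingletonClass (β i)] {P : ∀ i, Measure (β i)}
    [∀ i, IsProbabilityMeasure (P i)] {c : ℝ≥0∞} (hc : c < 1) (hP : ∀ i x, P i {x} ≤ c) :
    NullSingletonClass (Measure.infinitePi P) := by
  refine ⟨fun g ↦ le_antisymm (ge_of_tendsto' (ENNReal.tendsto_pow_atTop_nhds_zero_of_lt_one hc)
    fun n ↦ ?_) zero_le⟩
  calc Measure.infinitePi P {g}
      ≤ Measure.infinitePi P ((Finset.range n : Set ℕ).pi fun i ↦ {g i}) :=
        measure_mono fun f hf i _ ↦ by rw [mem_singleton_iff.1 hf]; rfl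
    _ = ∏ i ∈ Finset.range n, P i {g i} :=
        Measure.infinitePi_pi _ fun i _ ↦ measurableSet_singleton _
    _ ≤ c ^ n := by
        simpa using Finset.prod_le_pow_card (Finset.range n) _ c fun i _ ↦ hP i (g i)

noncomputable abbrev coinFlips : Measure (ℕ → Bool) :=
  Measure.infinitePi fun _ ↦ (PMF.uniformOfFintype Bool).toMeasure

instance : NullSingletonClass coinFlips :=
  nullSingletonClass_infinitePi_of_le ENNReal.one_half_lt_one fun _ b ↦ by
    rw [PMF.toMeasure_apply_singleton _ _ (measurableSet_singleton b), PMF.uniformOfFintype_apply]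
    simp

/-- `E₀` is not smooth: there is no Borel measurable `S : (ℕ → Bool) → ℝ` such that
`f E₀ g ↔ S f = S g` for all `f, g`. -/
theorem E0_not_smooth :
    ¬ ∃ S : (ℕ → Bool) → ℝ, Measurable S ∧
      ∀ f g : ℕ → Bool, E0 f g ↔ S f = S g := by
  rintro ⟨S, hS, hE0⟩
  have hE0_iff (f g : ℕ → Bool) : E0 f g ↔ ∀ᶠ n in atTop, f n = g n := eventually_atTop.symm
  obtain ⟨c, hc⟩ : ∃ c, S =ᵐ[coinFlips] Function.const _ c :=
    exists_ae_eq_const_of_invariant hS fun f g h ↦ (hE0 f g).1 ((hE0_iff f g).2 h)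
  obtain ⟨f₀, hf₀⟩ := hc.exists
  have h_class : ∀ᵐ f ∂coinFlips, f ∈ {g | ∀ᶠ n in atTop, g n = f₀ n} :=
    hc.mono fun f hf ↦ (hE0_iff f f₀).1 ((hE0 f f₀).2 (hf.trans hf₀.symm))
  obtain ⟨f, hf, hf_not⟩ :=
    (h_class.and ((countable_setOf_eventuallyEq f₀).ae_notMem coinFlips)).exists
  exact hf_not hf
end

section
/- Suppose X is an uncountable Polish space, E is an equivalence relation on X, and E₀ is Borel reducible to E (there is a Borel measurable φ : (ℕ → Bool) → X with f E₀ g ↔ φ f E φ g). Then E is not smooth: there is no Borel measurable S : X → ℝ such that for all x₁, x₂ ∈ X, x₁ E x₂ ↔ S x₁ = S x₂. -/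
/-!
Flipping finitely many coordinates gives homeomorphisms of Cantor space that preserve every
`E₀`-invariant set, and some of them move a given nonempty open set to meet another one. By the
Baire category theorem an `E₀`-invariant Baire measurable set is therefore meagre or comeagre.
If `S ∘ φ` reduced `E₀` to equality in a countably separated space, each preimage of a measurable
set would be meagre or comeagre, so `S ∘ φ` would be constant on a comeagre set. That set would
lie in a single `E₀`-class, but `E₀`-classes are countable unions of closed nowhere dense sets.
-/

open Filter Set Topology

theorem BaireMeasurableSet.isMeagre_or_mem_residual_of_invariant {α ι : Type*}
    [TopologicalSpace α] [BaireSpace α] {A : Set α} (hA : BaireMeasurableSet A)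
    (T : ι → α ≃ₜ α) (hAT : ∀ i, T i ⁻¹' A = A)
    (hmix : ∀ U V : Set α, IsOpen U → IsOpen V → U.Nonempty → V.Nonempty →
      ∃ i, (U ∩ T i ⁻¹' V).Nonempty) :
    IsMeagre A ∨ A ∈ residual α := by
  obtain ⟨U, hUo, hAU⟩ := hA.residualEq_isOpen
  obtain ⟨V, hVo, hAV⟩ := hA.compl.residualEq_isOpen
  rcases U.eq_empty_or_nonempty with rfl | hU
  · exact .inl (eventuallyEq_empty.1 hAU)
  rcases V.eq_empty_or_nonempty with rfl | hV
  · exact .inr (by simpa using eventuallyEq_empty.1 hAV)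
  obtain ⟨i, hW⟩ := hmix U V hUo hVo hU hV
  have hTV : T i ⁻¹' V =ᶠ[residual α] Aᶜ := by
    have : T i ⁻¹' Aᶜ =ᶠ[residual α] T i ⁻¹' V := hAV.comp_tendsto (T i).residual_map_eq.le
    rw [preimage_compl, hAT] at this
    exact this.symm
  have hWA : (U ∩ T i ⁻¹' V : Set α) =ᶠ[residual α] (∅ : Set α) :=
    inter_compl_self A ▸ hAU.symm.inter hTV
  exact absurd (eventuallyEq_empty.1 hWA) <|
    not_isMeagre_of_isOpen (hUo.inter (hVo.preimage (T i).continuous)) hW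

theorem tendsto_ite_lt_nhds {β : Type*} [TopologicalSpace β] (f g : ℕ → β) :
    Tendsto (fun k n => if n < k then g n else f n) atTop (𝓝 g) :=
  tendsto_pi_nhds.2 fun n => tendsto_const_nhds.congr'
    ((eventually_gt_atTop n).mono fun _ hk => (if_pos hk).symm)

theorem isMeagre_setOf_E0 (f : ℕ → Bool) : IsMeagre {g | E0 f g} := by
  have htail (N : ℕ) : IsNowhereDense {g : ℕ → Bool | ∀ n, N ≤ n → f n = g n} := by
    have hclosed : IsClosed {g : ℕ → Bool | ∀ n, N ≤ n → f n = g n} := by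
      simp only [ofPred_forall]
      exact isClosed_iInter fun n => isClosed_iInter fun _ =>
        isClosed_eq continuous_const (continuous_apply n)
    rw [hclosed.isNowhereDense_iff, eq_empty_iff_forall_notMem]
    intro g hg
    obtain ⟨k, hk, hNk⟩ := (((tendsto_ite_lt_nhds (fun n => !f n) g).eventually
      (mem_interior_iff_mem_nhds.1 hg)).and (eventually_ge_atTop N)).exists
    simpa using hk k hNk
  have hcover : {g | E0 f g} = ⋃ N, {g : ℕ → Bool | ∀ n, N ≤ n → f n = g n} := by
    ext g; simp [E0]
  rw [hcover]
  exact isMeagre_iUnion fun N => (htail N).isMeagre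

def xorHomeomorph (σ : ℕ → Bool) : (ℕ → Bool) ≃ₜ (ℕ → Bool) where
  toFun x n := xor (x n) (σ n)
  invFun x n := xor (x n) (σ n)
  left_inv x := by simp
  right_inv x := by simp
  continuous_toFun := by fun_prop
  continuous_invFun := by fun_prop

theorem E0_self_xorHomeomorph {σ : ℕ → Bool} (hσ : E0 σ fun _ => false) (x : ℕ → Bool) :
    E0 x (xorHomeomorph σ x) := by
  obtain ⟨N, hN⟩ := hσ
  exact ⟨N, fun n hn => by simp [xorHomeomorph, hN n hn]⟩

theorem exists_inter_preimage_xorHomeomorph_nonempty {U V : Set (ℕ → Bool)} (hV : IsOpen V)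
    {f : ℕ → Bool} (hf : f ∈ U) (hVne : V.Nonempty) :
    ∃ σ : {σ : ℕ → Bool // E0 σ fun _ => false}, (U ∩ xorHomeomorph σ ⁻¹' V).Nonempty := by
  obtain ⟨g, hg⟩ := hVne
  obtain ⟨k, hk⟩ := ((tendsto_ite_lt_nhds f g).eventually (hV.mem_nhds hg)).exists
  set σ : ℕ → Bool := fun n => decide (n < k) && xor (f n) (g n)
  have hσf : xorHomeomorph σ f = fun n => if n < k then g n else f n := by
    ext n
    by_cases hn : n < k <;> simp [xorHomeomorph, σ, hn]
  exact ⟨⟨σ, k, fun n hn => by simp [σ, hn]⟩, f, hf, by rwa [mem_preimage, hσf]⟩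

theorem isMeagre_or_mem_residual_of_E0_invariant {A : Set (ℕ → Bool)}
    (hA : BaireMeasurableSet A) (hinv : ∀ f g, E0 f g → (f ∈ A ↔ g ∈ A)) :
    IsMeagre A ∨ A ∈ residual (ℕ → Bool) :=
  hA.isMeagre_or_mem_residual_of_invariant (fun σ : {σ : ℕ → Bool // E0 σ fun _ => false} =>
      xorHomeomorph σ)
    (fun σ => ext fun x => (hinv _ _ (E0_self_xorHomeomorph σ.2 x)).symm)
    fun _ _ _ hV ⟨_, hf⟩ hVne => exists_inter_preimage_xorHomeomorph_nonempty hV hf hVne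

theorem not_exists_measurable_E0_reduction {β : Type*} [MeasurableSpace β]
    [MeasurableSpace.CountablySeparated β] :
    ¬ ∃ ψ : (ℕ → Bool) → β, Measurable ψ ∧ ∀ f g, E0 f g ↔ ψ f = ψ g := by
  rintro ⟨ψ, hψ, hred⟩
  have : Nonempty β := ⟨ψ fun _ => false⟩
  obtain ⟨r, hr⟩ := exists_eventuallyEq_const_of_forall_separating (l := residual _)
    MeasurableSet fun U hU => (isMeagre_or_mem_residual_of_E0_invariant
      (hψ hU).baireMeasurableSet fun f g hfg => by simp [(hred f g).1 hfg]).symm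
  obtain ⟨f, hf⟩ := nonempty_of_not_isMeagre (not_isMeagre_of_mem_residual hr)
  refine not_isMeagre_of_mem_residual (mem_of_superset hr fun g hg => ?_) (isMeagre_setOf_E0 f)
  exact (hred f g).2 (hf.trans hg.symm)

theorem not_smooth_of_E0_reducible_general
    (X : Type) [MeasurableSpace X]
    (E : X → X → Prop)
    (φ : (ℕ → Bool) → X) (hφ : Measurable φ)
    (hred : ∀ f g : ℕ → Bool, E0 f g ↔ E (φ f) (φ g)) :
    ¬ ∃ S : X → ℝ, Measurable S ∧ ∀ x₁ x₂ : X, E x₁ x₂ ↔ S x₁ = S x₂ := by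
  rintro ⟨S, hS, hSE⟩
  exact not_exists_measurable_E0_reduction
    ⟨S ∘ φ, hS.comp hφ, fun f g => (hred f g).trans (hSE (φ f) (φ g))⟩

/-- If `X` is an uncountable Polish space, `E` an equivalence relation on `X`, and `E₀` is
Borel reducible to `E`, then `E` is not smooth. -/
theorem not_smooth_of_E0_reducible
    (X : Type) [TopologicalSpace X] [PolishSpace X] [Uncountable X]
    [MeasurableSpace X] [BorelSpace X]
    (E : X → X → Prop) (hE : Equivalence E)
    (φ : (ℕ → Bool) → X) (hφ : Measurable φ)
    (hred : ∀ f g : ℕ → Bool, E0 f g ↔ E (φ f) (φ g)) :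
    ¬ ∃ S : X → ℝ, Measurable S ∧ ∀ x₁ x₂ : X, E x₁ x₂ ↔ S x₁ = S x₂ :=
  not_smooth_of_E0_reducible_general X E φ hφ hred
end

section
/- Feldman–Moore theorem: let X be a Polish space and E ⊆ X × X an equivalence relation that is a Borel subset of X × X and all of whose equivalence classes are countable. Then there exist a countable group Γ and an action of Γ on X (maps γ • · : X → X satisfying 1 • x = x and γ • (δ • x) = (γ * δ) • x) such that each map x ↦ γ • x is Borel measurable, and for all x, y ∈ X: x E y if and only if there exists γ ∈ Γ with γ • x = y. -/
/-!
Lusin–Novikov first. Write a Borel set with countable sections as `range f` for a continuous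
`f` on Baire space, and call `S ⊆ ℕ → ℕ` small if it is covered by countably many Borel sets whose
`f`-images are graphs. An analytic set that is not small contains two points with the same first
and different second `f`-coordinates, because an analytic graph extends to a Borel graph by two
applications of the separation theorem. If Baire space were not small, this would let us build a
Cantor scheme of cylinders in which the first coordinates of all nodes stay tied together while
the second coordinates are split at a dense set of nodes. Its limit is a continuous map `g` on
Cantor space with `(f ∘ g).1` constant and with no fibre of `(f ∘ g).2` having interior, which
contradicts the countability of the section by the Baire category theorem.

Feldman–Moore then follows by the usual trick: using a countable separating family, cut `E` off
the diagonal into countably many Borel partial injections with disjoint domain and range, extend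
each by the identity to a Borel involution, and let the free group on these involutions act.
-/

open Set Filter Topology MeasureTheory PiNat TopologicalSpace

namespace FeldmanMoore

section Cylinders

variable {α : Type*} [TopologicalSpace α] [DiscreteTopology α]

theorem exists_cylinder_subset {x : ℕ → α} {V : Set (ℕ → α)} (hV : V ∈ 𝓝 x) :
    ∃ n, cylinder x n ⊆ V := by
  obtain ⟨_, ⟨y, n, rfl⟩, hx, hsub⟩ :=
    (isTopologicalBasis_cylinders fun _ => α).mem_nhds_iff.1 hV
  exact ⟨n, (mem_cylinder_iff_eq.1 hx).symm ▸ hsub⟩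

theorem eventually_cylinder_subset {x : ℕ → α} {V : Set (ℕ → α)} (hV : V ∈ 𝓝 x) :
    ∀ᶠ n in atTop, cylinder x n ⊆ V := by
  obtain ⟨N, hN⟩ := exists_cylinder_subset hV
  exact eventually_atTop.2 ⟨N, fun n hn => (cylinder_anti x hn).trans hN⟩

theorem tendsto_of_mem_cylinder {x : ℕ → α} {y : ℕ → ℕ → α}
    (hy : ∀ n, y n ∈ cylinder x n) : Tendsto y atTop (𝓝 x) := fun _ hV =>
  (eventually_cylinder_subset hV).mono fun n hn => hn (hy n)

end Cylinders

def cyl (L : List ℕ) : Set (ℕ → ℕ) := cylinder (L.getD · 0) L.length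

def prefixList (z : ℕ → ℕ) (n : ℕ) : List ℕ := List.ofFn fun i : Fin n => z i

@[simp] theorem length_prefixList (z : ℕ → ℕ) (n : ℕ) : (prefixList z n).length = n := by
  simp [prefixList]

theorem cyl_prefixList (z : ℕ → ℕ) (n : ℕ) : cyl (prefixList z n) = cylinder z n := by
  ext y
  simp +contextual [cyl, prefixList, mem_cylinder_iff]

theorem measurableSet_cyl (L : List ℕ) : MeasurableSet (cyl L) :=
  (isOpen_cylinder _ _ _).measurableSet

theorem cyl_subset_cylinder {L : List ℕ} {z : ℕ → ℕ} (hz : z ∈ cyl L) {n : ℕ}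
    (hn : n ≤ L.length) : cyl L ⊆ cylinder z n :=
  (cylinder_anti _ hn).trans (mem_cylinder_iff_eq.1 (cylinder_anti _ hn hz)).symm.subset

theorem prefix_prefixList {L : List ℕ} {z : ℕ → ℕ} (hz : z ∈ cyl L) {n : ℕ}
    (hn : L.length ≤ n) : L <+: prefixList z n := by
  refine List.prefix_iff_eq_take.2 (List.ext_getElem (by simpa using hn) fun i h₁ h₂ => ?_)
  have := mem_cylinder_iff.1 hz i h₁
  simp_all [prefixList]

theorem _root_.List.IsPrefix.getD_eq {β : Type*} {L M : List β} (h : L <+: M) {i : ℕ}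
    (hi : i < L.length) (d : β) : L.getD i d = M.getD i d := by
  rw [List.getD_eq_getElem _ _ hi, List.getD_eq_getElem _ _ (hi.trans_le h.length_le),
    h.getElem hi]

section Small

variable {X Y : Type*} (f : (ℕ → ℕ) → X × Y)

def Small (S : Set (ℕ → ℕ)) : Prop :=
  ∃ 𝒞 : Set (Set (ℕ → ℕ)), 𝒞.Countable ∧
    (∀ B ∈ 𝒞, MeasurableSet B ∧ InjOn Prod.fst (f '' B)) ∧ S ⊆ ⋃₀ 𝒞

variable {f}

theorem Small.mono {S T : Set (ℕ → ℕ)} (h : Small f T) (hST : S ⊆ T) : Small f S :=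
  let ⟨𝒞, h𝒞, hB, hT⟩ := h
  ⟨𝒞, h𝒞, hB, hST.trans hT⟩

theorem small_iUnion {ι : Type*} [Countable ι] {S : ι → Set (ℕ → ℕ)}
    (h : ∀ i, Small f (S i)) : Small f (⋃ i, S i) := by
  choose 𝒞 h𝒞 hB hS using h
  refine ⟨⋃ i, 𝒞 i, countable_iUnion h𝒞, fun B hB' => ?_, iUnion_subset fun i => ?_⟩
  · obtain ⟨i, hi⟩ := mem_iUnion.1 hB'
    exact hB i B hi
  · exact (hS i).trans (sUnion_mono (subset_iUnion 𝒞 i))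

theorem Small.union {S T : Set (ℕ → ℕ)} (hS : Small f S) (hT : Small f T) :
    Small f (S ∪ T) := by
  rw [union_eq_iUnion]
  exact small_iUnion fun b => by cases b <;> assumption

theorem small_empty : Small f ∅ := ⟨∅, countable_empty, by simp, empty_subset _⟩

theorem Small.exists_measurableSet_superset {S : Set (ℕ → ℕ)} (h : Small f S) :
    ∃ U, MeasurableSet U ∧ Small f U ∧ S ⊆ U :=
  let ⟨𝒞, h𝒞, hB, hS⟩ := h
  ⟨⋃₀ 𝒞, .sUnion h𝒞 fun B h => (hB B h).1, ⟨𝒞, h𝒞, hB, subset_rfl⟩, hS⟩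

end Small

theorem _root_.MeasureTheory.AnalyticSet.off_graph {X Y : Type*} [TopologicalSpace X]
    [TopologicalSpace Y] [PolishSpace Y] {P : Set (X × Y)} (hP : AnalyticSet P) :
    AnalyticSet {q : X × Y | ∃ y, (q.1, y) ∈ P ∧ y ≠ q.2} := by
  obtain ⟨Z, _, _, g, hg, rfl⟩ := analyticSet_iff_exists_polishSpace_range.1 hP
  have hopen : IsOpen {t : Z × Y | (g t.1).2 ≠ t.2} :=
    isOpen_ne_fun (continuous_snd.comp (hg.comp continuous_fst)) continuous_snd
  convert hopen.analyticSet_image (f := fun t => ((g t.1).1, t.2)) (by fun_prop) using 1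
  ext ⟨x, y⟩
  simp only [mem_range, mem_image, Prod.mk.injEq]
  constructor
  · rintro ⟨y', ⟨z, hz⟩, hne⟩
    exact ⟨(z, y), by simpa [hz] using hne, by simp [hz]⟩
  · rintro ⟨⟨z, y⟩, hne, rfl, rfl⟩
    exact ⟨(g z).2, ⟨z, rfl⟩, hne⟩

section GraphExtension

variable {X Y : Type*} [TopologicalSpace X] [PolishSpace X] [MeasurableSpace X] [BorelSpace X]
  [TopologicalSpace Y] [PolishSpace Y] [MeasurableSpace Y] [BorelSpace Y]

theorem _root_.MeasureTheory.AnalyticSet.exists_measurableSet_superset_injOn_fst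
    {P : Set (X × Y)} (hP : AnalyticSet P) (hinj : InjOn Prod.fst P) :
    ∃ G, MeasurableSet G ∧ P ⊆ G ∧ InjOn Prod.fst G := by
  set Q : Set (X × Y) := {q | ∃ y, (q.1, y) ∈ P ∧ y ≠ q.2}
  have hPQ : Disjoint P Q := by
    rw [Set.disjoint_left]
    rintro p hp ⟨y, hy, hne⟩
    exact hne (congrArg Prod.snd (hinj hy hp rfl))
  obtain ⟨B, hPB, hQB, hB⟩ := hP.measurablySeparable hP.off_graph hPQ
  -- its projection consists of the points of `X` over which `B` is not a graph
  set M : Set (X × Y × Y) := {t | (t.1, t.2.1) ∈ B ∧ (t.1, t.2.2) ∈ B ∧ t.2.1 ≠ t.2.2}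
  have hM : MeasurableSet M :=
    (hB.preimage (by fun_prop)).inter ((hB.preimage (by fun_prop)).inter
      (measurableSet_eq_fun measurable_snd.fst measurable_snd.snd).compl)
  have hdisj : Disjoint (Prod.fst '' P) (Prod.fst '' M) := by
    rw [Set.disjoint_left]
    rintro x ⟨p, hp, rfl⟩ ⟨t, ⟨ht₁, ht₂, hne⟩, htx⟩
    have hB_over : ∀ y, (p.1, y) ∈ B → y = p.2 := fun y hy => by
      by_contra h
      exact Set.disjoint_left.1 hQB
        (show (p.1, y) ∈ Q from ⟨p.2, hp, fun h' => h h'.symm⟩) hy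
    rw [htx] at ht₁ ht₂
    exact hne ((hB_over _ ht₁).trans (hB_over _ ht₂).symm)
  obtain ⟨D, hPD, hMD, hD⟩ := (hP.image_of_continuous continuous_fst).measurablySeparable
    (hM.analyticSet.image_of_continuous continuous_fst) hdisj
  refine ⟨B ∩ Prod.fst ⁻¹' D, hB.inter (hD.preimage measurable_fst),
    fun p hp => ⟨hPB hp, hPD (mem_image_of_mem _ hp)⟩, ?_⟩
  rintro p ⟨hpB, hpD⟩ q ⟨hqB, hqD⟩ h
  by_contra hne
  have hq : (p.1, q.2) ∈ B := by rw [h]; exact hqB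
  refine Set.disjoint_left.1 hMD ⟨(p.1, p.2, q.2), ⟨hpB, hq, fun h' => hne ?_⟩, rfl⟩ hpD
  exact Prod.ext h h'

variable {f : (ℕ → ℕ) → X × Y}

theorem exists_fst_eq_snd_ne_of_not_small (hf : Continuous f) {P : Set (ℕ → ℕ)}
    (hP : AnalyticSet P) (h : ¬ Small f P) :
    ∃ z ∈ P, ∃ z' ∈ P, (f z).1 = (f z').1 ∧ (f z).2 ≠ (f z').2 := by
  by_contra! hcon
  have hinj : InjOn Prod.fst (f '' P) := by
    rintro _ ⟨z, hz, rfl⟩ _ ⟨z', hz', rfl⟩ h₁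
    exact Prod.ext h₁ (hcon z hz z' hz' h₁)
  obtain ⟨G, hG, hPG, hGinj⟩ :=
    (hP.image_of_continuous hf).exists_measurableSet_superset_injOn_fst hinj
  exact h ⟨{f ⁻¹' G}, countable_singleton _,
    by simpa using ⟨hG.preimage hf.measurable, hGinj.mono (image_preimage_subset f G)⟩,
    by simpa using (image_subset_iff.1 hPG)⟩

end GraphExtension

section Probes

def node (b : ℕ → Bool) (n : ℕ) : Fin n → Bool := fun i => b i

/-- Each term of the dense sequence recurs as `probe k` for arbitrarily large `k`. -/
noncomputable def probe (k : ℕ) : ℕ → Bool := denseSeq (ℕ → Bool) k.unpair.1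

noncomputable def branch (k : ℕ) (j : Bool) : ℕ → Bool := Function.update (probe k) k j

theorem node_branch_last (k : ℕ) (j : Bool) : node (branch k j) (k + 1) (Fin.last k) = j := by
  simp [node, branch]

theorem init_node_branch (k : ℕ) (j : Bool) :
    Fin.init (node (branch k j) (k + 1)) = node (probe k) k := by
  funext i
  simp [Fin.init, node, branch, Function.update_of_ne i.isLt.ne]

theorem not_countable_range_of_branch {Z : Type*} [TopologicalSpace Z] [T1Space Z]
    {g : (ℕ → Bool) → Z} (hg : Continuous g)
    (hsep : ∀ k, g (branch k false) ≠ g (branch k true)) : ¬ (range g).Countable := by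
  intro hcount
  have := hcount.to_subtype
  have hcover : ⋃ y : range g, g ⁻¹' {y.1} = univ :=
    eq_univ_of_forall fun b => mem_iUnion.2 ⟨⟨g b, b, rfl⟩, rfl⟩
  obtain ⟨y, b, hb⟩ :=
    nonempty_interior_of_iUnion_of_closed (fun y => isClosed_singleton.preimage hg) hcover
  obtain ⟨N, hN⟩ := exists_cylinder_subset (isOpen_interior.mem_nhds hb)
  obtain ⟨n, hn⟩ := (denseRange_denseSeq (ℕ → Bool)).exists_mem_open
    (isOpen_cylinder _ b N) ⟨b, self_mem_cylinder b N⟩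
  -- at stage `k = pair n N` the probe is `denseSeq n`, which lies in `cylinder b N`
  have hbranch : ∀ j, branch (Nat.pair n N) j ∈ g ⁻¹' {y.1} := fun j => by
    refine interior_subset (hN ?_)
    rw [mem_cylinder_iff_eq, ← mem_cylinder_iff_eq.1 hn]
    refine mem_cylinder_iff_eq.1 (cylinder_anti _ (Nat.right_le_pair n N) ?_)
    simpa [branch, probe] using update_mem_cylinder (probe (Nat.pair n N)) _ j
  exact hsep _ ((hbranch false).trans (hbranch true).symm)

end Probes

section Scheme

variable {X Y : Type*} (f : (ℕ → ℕ) → X × Y) {k : ℕ}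

/-- A configuration of level `k` attaches the cylinder `cyl (c u)` to each node `u` of length
`k` of the binary tree. -/
abbrev Config (k : ℕ) : Type := (Fin k → Bool) → List ℕ

def realizations (c : Config k) (U : Set (ℕ → ℕ)) : Set ((Fin k → Bool) → ℕ → ℕ) :=
  {β | (∀ u, β u ∈ cyl (c u)) ∧ (∀ u v, (f (β u)).1 = (f (β v)).1) ∧ ∀ u, β u ∉ U}

def trace (c : Config k) (U : Set (ℕ → ℕ)) : Set (ℕ → ℕ) :=
  (fun β => β (node (probe k) k)) '' realizations f c U

def IsGood (c : Config k) : Prop :=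
  (∀ u, k ≤ (c u).length) ∧ ∀ U, MeasurableSet U → Small f U → ¬ Small f (trace f c U)

def IsSplitRefinement (c : Config k) (c' : Config (k + 1)) : Prop :=
  (∀ w, c (Fin.init w) <+: c' w) ∧
    Disjoint ((fun z => (f z).2) '' cyl (c' (node (branch k false) (k + 1))))
      ((fun z => (f z).2) '' cyl (c' (node (branch k true) (k + 1))))

variable {f}

theorem realizations_anti (c : Config k) {U V : Set (ℕ → ℕ)} (h : U ⊆ V) :
    realizations f c V ⊆ realizations f c U :=
  fun _ ⟨hcyl, hfst, hV⟩ => ⟨hcyl, hfst, fun u hu => hV u (h hu)⟩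

theorem measurableSet_realizations [TopologicalSpace X] [T2Space X] [TopologicalSpace Y]
    (hf : Continuous f) (c : Config k) {U : Set (ℕ → ℕ)}
    (hU : MeasurableSet U) : MeasurableSet (realizations f c U) := by
  have hfst : ∀ u v, MeasurableSet {β : (Fin k → Bool) → ℕ → ℕ | (f (β u)).1 = (f (β v)).1} :=
    fun u v => (isClosed_eq (by fun_prop) (by fun_prop)).measurableSet
  simp only [realizations, ofPred_and, ofPred_forall]
  exact .inter (.iInter fun u => (measurableSet_cyl _).preimage (measurable_pi_apply u))
    (.inter (.iInter fun u => .iInter fun v => hfst u v)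
      (.iInter fun u => hU.compl.preimage (measurable_pi_apply u)))

theorem analyticSet_trace [TopologicalSpace X] [T2Space X] [TopologicalSpace Y]
    (hf : Continuous f) (c : Config k) {U : Set (ℕ → ℕ)} (hU : MeasurableSet U) :
    AnalyticSet (trace f c U) :=
  (measurableSet_realizations hf c hU).analyticSet.image_of_continuous (continuous_apply _)

def glue (β β' : (Fin k → Bool) → ℕ → ℕ) : (Fin (k + 1) → Bool) → ℕ → ℕ :=
  fun w => cond (w (Fin.last k)) (β' (Fin.init w)) (β (Fin.init w))

theorem glue_mem_realizations {c : Config k} {U : Set (ℕ → ℕ)} {β β'}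
    (hβ : β ∈ realizations f c U) (hβ' : β' ∈ realizations f c U) {u : Fin k → Bool}
    (hu : (f (β u)).1 = (f (β' u)).1) :
    glue β β' ∈ realizations f (fun w => c (Fin.init w)) U := by
  obtain ⟨hcyl, hfst, hU⟩ := hβ
  obtain ⟨hcyl', hfst', hU'⟩ := hβ'
  refine ⟨fun w => ?_, fun w v => ?_, fun w => ?_⟩
  · cases h : w (Fin.last k) <;> simp [glue, h, hcyl, hcyl']
  · have hfst_glue : ∀ w, (f (glue β β' w)).1 = (f (β u)).1 := fun w => by
      cases h : w (Fin.last k)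
      · simpa [glue, h] using hfst _ u
      · simpa [glue, h, hu] using hfst' _ u
    rw [hfst_glue, hfst_glue]
  · cases h : w (Fin.last k) <;> simp [glue, h, hU, hU']

theorem glue_node_branch (β β' : (Fin k → Bool) → ℕ → ℕ) (j : Bool) :
    glue β β' (node (branch k j) (k + 1)) =
      cond j (β' (node (probe k) k)) (β (node (probe k) k)) := by
  simp [glue, node_branch_last, init_node_branch]

theorem exists_split_refinement [TopologicalSpace X] [TopologicalSpace Y] [T2Space Y]
    (hf : Continuous f) {c : Config k} {U : Set (ℕ → ℕ)} {β β'}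
    (hβ : β ∈ realizations f c U) (hβ' : β' ∈ realizations f c U)
    (hfst : (f (β (node (probe k) k))).1 = (f (β' (node (probe k) k))).1)
    (hsnd : (f (β (node (probe k) k))).2 ≠ (f (β' (node (probe k) k))).2) :
    ∃ c' : Config (k + 1), (∀ w, k + 1 ≤ (c' w).length) ∧ IsSplitRefinement f c c' ∧
      (realizations f c' U).Nonempty := by
  set γ := glue β β'
  have hγ := glue_mem_realizations hβ hβ' hfst
  obtain ⟨O₀, O₁, hO₀, hO₁, hγ₀, hγ₁, hO⟩ := t2_separation hsnd
  have hnhds : ∀ j, (fun z => (f z).2) ⁻¹' cond j O₁ O₀ ∈ 𝓝 (γ (node (branch k j) (k + 1))) :=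
    fun j => (continuous_snd.comp hf).continuousAt.preimage_mem_nhds <| by
      cases j
      · simpa [γ, glue_node_branch] using hO₀.mem_nhds hγ₀
      · simpa [γ, glue_node_branch] using hO₁.mem_nhds hγ₁
  obtain ⟨L, hLk, hLc, hLO⟩ := ((eventually_ge_atTop (k + 1)).and
    ((eventually_all.2 fun w : Fin (k + 1) → Bool =>
      eventually_ge_atTop (c (Fin.init w)).length).and
      (eventually_all.2 fun j => eventually_cylinder_subset (hnhds j)))).exists
  refine ⟨fun w => prefixList (γ w) L, fun w => by simpa using hLk,
    ⟨fun w => prefix_prefixList (hγ.1 w) (hLc w), ?_⟩, γ, ?_, hγ.2⟩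
  · simp only [cyl_prefixList]
    exact hO.mono (image_subset_iff.2 (hLO false)) (image_subset_iff.2 (hLO true))
  · simp [cyl_prefixList]

theorem isGood_nil (hns : ¬ Small f univ) :
    IsGood f fun _ : Fin 0 → Bool => ([] : List ℕ) := by
  refine ⟨fun _ => le_rfl, fun U _ hU htrace => hns ((hU.union htrace).mono fun z _ => ?_)⟩
  by_cases hz : z ∈ U
  · exact Or.inl hz
  · exact Or.inr ⟨fun _ => z, ⟨fun _ => by simp [cyl], fun _ _ => rfl, fun _ => hz⟩, rfl⟩

end Scheme

section Step

variable {X Y : Type*} [TopologicalSpace X] [PolishSpace X] [MeasurableSpace X] [BorelSpace X]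
  [TopologicalSpace Y] [PolishSpace Y] [MeasurableSpace Y] [BorelSpace Y]
  {f : (ℕ → ℕ) → X × Y}

theorem IsGood.exists_refinement (hf : Continuous f) {k : ℕ} {c : Config k}
    (hc : IsGood f c) : ∃ c' : Config (k + 1), IsGood f c' ∧ IsSplitRefinement f c c' := by
  by_contra hcon
  have hbad : ∀ c' : {c' : Config (k + 1) //
      (∀ w, k + 1 ≤ (c' w).length) ∧ IsSplitRefinement f c c'},
      ∃ U, MeasurableSet U ∧ Small f U ∧ Small f (trace f c'.1 U) := by
    rintro ⟨c', hlen, hsplit⟩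
    by_contra! h
    exact hcon ⟨c', ⟨hlen, h⟩, hsplit⟩
  choose U hUm hUs hUt using hbad
  -- one small Borel set `V` defeating every candidate refinement at once
  obtain ⟨V, hVm, hVs, hV⟩ :=
    ((small_iUnion hUs).union (small_iUnion hUt)).exists_measurableSet_superset
  obtain ⟨_, ⟨β, hβ, rfl⟩, _, ⟨β', hβ', rfl⟩, hfst, hsnd⟩ :=
    exists_fst_eq_snd_ne_of_not_small hf (analyticSet_trace hf c hVm) (hc.2 V hVm hVs)
  obtain ⟨c', hlen, hsplit, γ, hγ⟩ := exists_split_refinement hf hβ hβ' hfst hsnd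
  have hγU : γ ∈ realizations f c' (U ⟨c', hlen, hsplit⟩) :=
    realizations_anti c' (fun z hz => hV (Or.inl (mem_iUnion.2 ⟨_, hz⟩))) hγ
  exact hγ.2.2 _ (hV (Or.inr (mem_iUnion.2 ⟨⟨c', hlen, hsplit⟩, γ, hγU, rfl⟩)))

theorem exists_good_scheme (hf : Continuous f) (hns : ¬ Small f univ) :
    ∃ c : (k : ℕ) → Config k,
      (∀ k, IsGood f (c k)) ∧ ∀ k, IsSplitRefinement f (c k) (c (k + 1)) := by
  choose next hnext using fun k (c : {c : Config k // IsGood f c}) => c.2.exists_refinement hf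
  let c : (k : ℕ) → {c : Config k // IsGood f c} :=
    Nat.rec ⟨fun _ => [], isGood_nil hns⟩ fun k c => ⟨next k c, (hnext k c).1⟩
  exact ⟨fun k => (c k).1, fun k => (c k).2, fun k => (hnext k (c k)).2⟩

end Step

section Limit

def limitPoint (c : (k : ℕ) → Config k) (b : ℕ → Bool) : ℕ → ℕ :=
  fun i => (c (i + 1) (node b (i + 1))).getD i 0

theorem continuous_limitPoint (c : (k : ℕ) → Config k) : Continuous (limitPoint c) :=
  continuous_pi fun i =>
    (continuous_of_discreteTopology (f := fun u => (c (i + 1) u).getD i 0)).comp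
      (continuous_pi fun j : Fin (i + 1) => continuous_apply j.1)

variable {c : (k : ℕ) → Config k} (hpre : ∀ k w, c k (Fin.init w) <+: c (k + 1) w)
  (hlen : ∀ k u, k ≤ (c k u).length)
include hpre

theorem prefix_of_le (b : ℕ → Bool) {m n : ℕ} (h : m ≤ n) :
    c m (node b m) <+: c n (node b n) := by
  induction n, h using Nat.le_induction with
  | base => exact List.prefix_refl _
  | succ n _ ih => exact ih.trans (hpre n (node b (n + 1)))

include hlen

theorem limitPoint_mem_cyl (b : ℕ → Bool) (n : ℕ) :
    limitPoint c b ∈ cyl (c n (node b n)) := by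
  rw [cyl, mem_cylinder_iff]
  intro i hi
  rcases le_total (i + 1) n with h | h
  · exact (prefix_of_le hpre b h).getD_eq (Nat.lt_of_succ_le (hlen _ _)) 0
  · exact ((prefix_of_le hpre b h).getD_eq hi 0).symm

theorem fst_limitPoint_eq {X Y : Type*} [TopologicalSpace X] [T2Space X] [TopologicalSpace Y]
    {f : (ℕ → ℕ) → X × Y} (hf : Continuous f) (hne : ∀ k, (realizations f (c k) ∅).Nonempty)
    (b b' : ℕ → Bool) : (f (limitPoint c b)).1 = (f (limitPoint c b')).1 := by
  choose β hβ using hne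
  have hlim : ∀ b,
      Tendsto (fun n => (f (β n (node b n))).1) atTop (𝓝 (f (limitPoint c b)).1) :=
    fun b => ((continuous_fst.comp hf).tendsto _).comp <| tendsto_of_mem_cylinder fun n =>
      cyl_subset_cylinder (limitPoint_mem_cyl hpre hlen b n) (hlen n _) ((hβ n).1 _)
  exact tendsto_nhds_unique (hlim b) ((hlim b').congr fun n => ((hβ n).2.1 _ _).symm)

end Limit

section LusinNovikov

variable {X Y : Type*} [TopologicalSpace X] [PolishSpace X] [MeasurableSpace X] [BorelSpace X]
  [TopologicalSpace Y] [PolishSpace Y] [MeasurableSpace Y] [BorelSpace Y]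

theorem small_univ_of_countable_sections {f : (ℕ → ℕ) → X × Y} (hf : Continuous f)
    (hsec : ∀ x, {y | (x, y) ∈ range f}.Countable) : Small f univ := by
  by_contra hns
  obtain ⟨c, hgood, hsplit⟩ := exists_good_scheme hf hns
  have hpre : ∀ k w, c k (Fin.init w) <+: c (k + 1) w := fun k => (hsplit k).1
  have hlen : ∀ k u, k ≤ (c k u).length := fun k => (hgood k).1
  have hne : ∀ k, (realizations f (c k) ∅).Nonempty := fun k => by
    obtain ⟨_, β, hβ, rfl⟩ : (trace f (c k) ∅).Nonempty :=
      nonempty_iff_ne_empty.2 fun h =>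
        (hgood k).2 ∅ .empty small_empty (by rw [h]; exact small_empty)
    exact ⟨β, hβ⟩
  have hbranch :
      ∀ k, (f (limitPoint c (branch k false))).2 ≠ (f (limitPoint c (branch k true))).2 :=
    fun k => (hsplit k).2.ne_of_mem (mem_image_of_mem _ (limitPoint_mem_cyl hpre hlen _ _))
      (mem_image_of_mem _ (limitPoint_mem_cyl hpre hlen _ _))
  -- all points `f (limitPoint c b)` lie over the same `x`, so their second coordinates are few
  refine not_countable_range_of_branch
    (continuous_snd.comp (hf.comp (continuous_limitPoint c))) hbranch
    ((hsec (f (limitPoint c fun _ => false)).1).mono ?_)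
  rintro _ ⟨b, rfl⟩
  exact ⟨limitPoint c b, Prod.ext (fst_limitPoint_eq hpre hlen hf hne b _) rfl⟩

/-- The Lusin–Novikov theorem. -/
theorem _root_.MeasurableSet.exists_countable_sUnion_injOn_fst {s : Set (X × Y)}
    (hs : MeasurableSet s) (hsec : ∀ x, {y | (x, y) ∈ s}.Countable) :
    ∃ 𝒢 : Set (Set (X × Y)), 𝒢.Countable ∧
      (∀ G ∈ 𝒢, MeasurableSet G ∧ InjOn Prod.fst G) ∧ ⋃₀ 𝒢 = s := by
  obtain rfl | ⟨f, hf, rfl⟩ : s = ∅ ∨ ∃ f : (ℕ → ℕ) → X × Y, Continuous f ∧ range f = s :=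
    by simpa [AnalyticSet] using hs.analyticSet
  · exact ⟨∅, countable_empty, by simp, sUnion_empty⟩
  obtain ⟨𝒞, h𝒞, hB, hcover⟩ := small_univ_of_countable_sections hf hsec
  have hext : ∀ B ∈ 𝒞, ∃ G, MeasurableSet G ∧ f '' B ⊆ G ∧ InjOn Prod.fst G := fun B hB' =>
    ((hB B hB').1.analyticSet.image_of_continuous hf).exists_measurableSet_superset_injOn_fst
      (hB B hB').2
  choose! G hGm hBG hGinj using hext
  refine ⟨(fun B => G B ∩ range f) '' 𝒞, h𝒞.image _, ?_, ?_⟩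
  · rintro _ ⟨B, hB', rfl⟩
    exact ⟨(hGm B hB').inter hs, (hGinj B hB').mono inter_subset_left⟩
  · refine Subset.antisymm (sUnion_subset ?_) ?_
    · rintro _ ⟨B, -, rfl⟩
      exact inter_subset_right
    · rintro _ ⟨z, rfl⟩
      obtain ⟨B, hB', hz⟩ := hcover (mem_univ z)
      exact ⟨_, mem_image_of_mem _ hB', hBG B hB' (mem_image_of_mem f hz), z, rfl⟩

end LusinNovikov

section Involutions

variable {X Y : Type*} [MeasurableSpace X] [StandardBorelSpace X]
  [MeasurableSpace Y] [StandardBorelSpace Y]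

theorem exists_countable_separating_family :
    ∃ 𝒮 : Set (Set X), 𝒮.Countable ∧ (∀ s ∈ 𝒮, MeasurableSet s) ∧
      ∀ x y, x ≠ y → ∃ s ∈ 𝒮, x ∈ s ∧ y ∉ s := by
  obtain ⟨𝒮, h𝒮c, h𝒮m, hsep⟩ :=
    HasCountableSeparatingOn.exists_countable_separating (α := X) (p := MeasurableSet) (t := univ)
  refine ⟨𝒮 ∪ compl '' 𝒮, h𝒮c.union (h𝒮c.image _), ?_, fun x y hxy => ?_⟩
  · rintro _ (hs | ⟨s, hs, rfl⟩)
    exacts [h𝒮m _ hs, (h𝒮m s hs).compl]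
  · by_contra! h
    refine hxy (hsep x trivial y trivial fun s hs => ⟨h s (.inl hs), fun hy => ?_⟩)
    by_contra hx
    exact h sᶜ (.inr ⟨s, hs, rfl⟩) hx hy

theorem exists_measurable_eq_of_injOn_fst {W : Set (X × Y)} (hW : MeasurableSet W)
    (hinj : InjOn Prod.fst W) (hY : X → Nonempty Y) :
    ∃ g : X → Y, Measurable g ∧ ∀ q ∈ W, g q.1 = q.2 := by
  have := hW.standardBorel
  obtain ⟨g, hg, hgW⟩ := ((measurable_fst.comp measurable_subtype_coe).measurableEmbedding
    (injOn_iff_injective.1 hinj)).exists_measurable_extend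
      (measurable_snd.comp measurable_subtype_coe) hY
  exact ⟨g, hg, fun q hq => congrFun hgW ⟨q, hq⟩⟩

theorem exists_measurable_involutive {W : Set (X × X)} (hW : MeasurableSet W)
    (h₁ : InjOn Prod.fst W) (h₂ : InjOn Prod.snd W)
    (hdisj : Disjoint (Prod.fst '' W) (Prod.snd '' W)) :
    ∃ T : X → X, Measurable T ∧ Function.Involutive T ∧ (∀ q ∈ W, T q.1 = q.2) ∧
      ∀ x, T x = x ∨ (x, T x) ∈ W ∨ (T x, x) ∈ W := by
  classical
  obtain ⟨g, hg, hgW⟩ := exists_measurable_eq_of_injOn_fst hW h₁ fun x => ⟨x⟩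
  obtain ⟨h, hh, hhW⟩ := exists_measurable_eq_of_injOn_fst (hW.preimage measurable_swap)
    (fun p hp q hq hpq => Prod.swap_injective (h₂ hp hq hpq)) fun x => ⟨x⟩
  set D := Prod.fst '' W
  set R := Prod.snd '' W
  set T := D.piecewise g (R.piecewise h id) with hT
  have hT₁ : ∀ q ∈ W, T q.1 = q.2 := fun q hq => by
    rw [hT, piecewise_eq_of_mem _ _ _ (show q.1 ∈ D from mem_image_of_mem _ hq), hgW q hq]
  have hT₂ : ∀ q ∈ W, T q.2 = q.1 := fun q hq => by
    rw [hT, piecewise_eq_of_notMem _ _ _ (disjoint_right.1 hdisj (mem_image_of_mem _ hq)),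
      piecewise_eq_of_mem _ _ _ (show q.2 ∈ R from mem_image_of_mem _ hq)]
    exact hhW q.swap hq
  have hT₀ : ∀ x ∉ D, x ∉ R → T x = x := fun x hD hR => by
    rw [hT, piecewise_eq_of_notMem _ _ _ hD, piecewise_eq_of_notMem _ _ _ hR, id]
  have hcases : ∀ x, (∃ q ∈ W, q.1 = x) ∨ (∃ q ∈ W, q.2 = x) ∨ (x ∉ D ∧ x ∉ R) := fun x =>
    (em (x ∈ D)).imp id fun hD => (em (x ∈ R)).imp id fun hR => ⟨hD, hR⟩
  refine ⟨T, hg.piecewise (hW.image_of_measurable_injOn measurable_fst h₁)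
    (hh.piecewise (hW.image_of_measurable_injOn measurable_snd h₂) measurable_id),
    fun x => ?_, hT₁, fun x => ?_⟩ <;>
  rcases hcases x with ⟨q, hq, rfl⟩ | ⟨q, hq, rfl⟩ | ⟨hD, hR⟩
  · rw [hT₁ q hq, hT₂ q hq]
  · rw [hT₂ q hq, hT₁ q hq]
  · rw [hT₀ x hD hR, hT₀ x hD hR]
  · exact .inr (.inl (by rwa [hT₁ q hq]))
  · exact .inr (.inr (by rwa [hT₂ q hq]))
  · exact .inl (hT₀ x hD hR)

end Involutions

section FullGroup

variable {X : Type*} [MeasurableSpace X] {E : X → X → Prop}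

def _root_.Equivalence.fullGroup (hE : Equivalence E) : Subgroup (Equiv.Perm X) where
  carrier := {g | Measurable g ∧ Measurable ⇑g⁻¹ ∧ ∀ x, E x (g x)}
  mul_mem' := by
    rintro g h ⟨hg, hg', hgE⟩ ⟨hh, hh', hhE⟩
    refine ⟨hg.comp hh, ?_, fun x => hE.trans (hhE x) (hgE (h x))⟩
    rw [mul_inv_rev, Equiv.Perm.coe_mul]
    exact hh'.comp hg'
  one_mem' := ⟨measurable_id, measurable_id, hE.refl⟩
  inv_mem' := by
    rintro g ⟨hg, hg', hgE⟩
    refine ⟨hg', by rwa [inv_inv], fun x => hE.symm ?_⟩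
    simpa using hgE (g⁻¹ x)

theorem _root_.Function.Involutive.toPerm_mem_fullGroup (hE : Equivalence E) {T : X → X}
    (hT : Function.Involutive T) (hTm : Measurable T) (hTE : ∀ x, E x (T x)) :
    hT.toPerm T ∈ hE.fullGroup :=
  ⟨hTm, by rwa [Equiv.Perm.inv_def, Function.Involutive.toPerm_symm], hTE⟩

end FullGroup

theorem exists_countable_fullGroup_generators {X : Type} [TopologicalSpace X] [PolishSpace X]
    [MeasurableSpace X] [BorelSpace X] {E : X → X → Prop} (hE : Equivalence E)
    (hBorel : MeasurableSet {p : X × X | E p.1 p.2}) (hctble : ∀ x, {y | E x y}.Countable) :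
    ∃ (ι : Type) (_ : Countable ι) (T : ι → Equiv.Perm X),
      (∀ i, T i ∈ hE.fullGroup) ∧ ∀ x y, E x y → x ≠ y → ∃ i, T i x = y := by
  obtain ⟨𝒢, h𝒢c, h𝒢, h𝒢E⟩ := hBorel.exists_countable_sUnion_injOn_fst hctble
  obtain ⟨𝒮, h𝒮c, h𝒮m, h𝒮sep⟩ := exists_countable_separating_family (X := X)
  have := h𝒢c.to_subtype
  have := h𝒮c.to_subtype
  -- on `W (G, G', s)` the map `x ↦ y` is a Borel partial injection sending `s` into `sᶜ`
  let W : 𝒢 × 𝒢 × 𝒮 → Set (X × X) := fun i =>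
    {q | q ∈ i.1.1 ∧ q.swap ∈ i.2.1.1 ∧ q.1 ∈ i.2.2.1 ∧ q.2 ∉ i.2.2.1}
  have hWE : ∀ i, ∀ q ∈ W i, E q.1 q.2 := fun i q hq =>
    h𝒢E.subset (subset_sUnion_of_mem i.1.2 hq.1)
  have hinv : ∀ i, ∃ T : X → X, Measurable T ∧ Function.Involutive T ∧
      (∀ q ∈ W i, T q.1 = q.2) ∧ ∀ x, T x = x ∨ (x, T x) ∈ W i ∨ (T x, x) ∈ W i := by
    rintro ⟨⟨G, hG⟩, ⟨G', hG'⟩, ⟨s, hs⟩⟩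
    refine exists_measurable_involutive ((h𝒢 G hG).1.inter
      (((h𝒢 G' hG').1.preimage measurable_swap).inter
        (((h𝒮m s hs).preimage measurable_fst).inter ((h𝒮m s hs).preimage measurable_snd).compl)))
      (fun p hp q hq => (h𝒢 G hG).2 hp.1 hq.1)
      (fun p hp q hq hpq => Prod.swap_injective ((h𝒢 G' hG').2 hp.2.1 hq.2.1 hpq)) ?_
    exact disjoint_left.2 fun _ ⟨p, hp, hpx⟩ ⟨q, hq, hqx⟩ =>
      hq.2.2.2 (hqx ▸ hpx ▸ hp.2.2.1)
  choose T hTm hTinv hTW hTgraph using hinv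
  refine ⟨𝒢 × 𝒢 × 𝒮, inferInstance, fun i => (hTinv i).toPerm (T i),
    fun i => (hTinv i).toPerm_mem_fullGroup hE (hTm i) fun x => ?_, fun x y hxy hne => ?_⟩
  · rcases hTgraph i x with h | h | h
    exacts [by rw [h]; exact hE.refl x, hWE i _ h, hE.symm (hWE i _ h)]
  · have hmem : ∀ {a b}, E a b → (a, b) ∈ ⋃₀ 𝒢 := fun h => h𝒢E.symm ▸ h
    obtain ⟨G, hG, hxy'⟩ := hmem hxy
    obtain ⟨G', hG', hyx'⟩ := hmem (hE.symm hxy)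
    obtain ⟨s, hs, hxs, hys⟩ := h𝒮sep x y hne
    exact ⟨(⟨G, hG⟩, ⟨G', hG'⟩, ⟨s, hs⟩), hTW _ (x, y) ⟨hxy', hyx', hxs, hys⟩⟩

end FeldmanMoore

open FeldmanMoore in
/-- Feldman–Moore theorem: every countable Borel equivalence relation on a Polish space is
the orbit equivalence relation of a Borel action of a countable group. -/
theorem feldman_moore
    (X : Type) [TopologicalSpace X] [PolishSpace X] [MeasurableSpace X] [BorelSpace X]
    (E : X → X → Prop) (hE : Equivalence E)
    (hBorel : MeasurableSet {p : X × X | E p.1 p.2})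
    (hctble : ∀ x : X, {y : X | E x y}.Countable) :
    ∃ (Γ : Type) (_ : Group Γ) (_ : Countable Γ) (act : Γ → X → X),
      (∀ x : X, act 1 x = x) ∧
      (∀ (γ δ : Γ) (x : X), act γ (act δ x) = act (γ * δ) x) ∧
      (∀ γ : Γ, Measurable (act γ)) ∧
      (∀ x y : X, E x y ↔ ∃ γ : Γ, act γ x = y) := by
  obtain ⟨ι, _, T, hT, hcover⟩ := exists_countable_fullGroup_generators hE hBorel hctble
  have hφ : ∀ γ, FreeGroup.lift T γ ∈ hE.fullGroup := fun γ =>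
    FreeGroup.range_lift_le (range_subset_iff.2 hT) ⟨γ, rfl⟩
  refine ⟨FreeGroup ι, inferInstance, inferInstance, fun γ => FreeGroup.lift T γ,
    fun x => by simp, fun γ δ x => by simp, fun γ => (hφ γ).1, fun x y => ⟨fun hxy => ?_, ?_⟩⟩
  · rcases eq_or_ne x y with rfl | hne
    · exact ⟨1, by simp⟩
    · obtain ⟨i, hi⟩ := hcover x y hxy hne
      exact ⟨FreeGroup.of i, by simpa using hi⟩
  · rintro ⟨γ, rfl⟩
    exact (hφ γ).2.2 x
end

section
/- The set IFT of ill-founded trees is a complete analytic set: (1) IFT is an analytic subset of the Polish space (List ℕ → Bool); (2) for every Polish space X and every analytic subset A ⊆ X there exists a Borel measurable function f : X → (List ℕ → Bool), taking values in the set Trees, such that for all x ∈ X: x ∈ A if and only if f x ∈ IFT; (3) IFT is not a Borel subset of (List ℕ → Bool). -/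
/-- A tree on `ℕ`, coded by its characteristic function: a set of finite sequences closed
under initial segments. -/
def IsTree (T : List ℕ → Bool) : Prop :=
  ∀ s t : List ℕ, T s = true → t <+: s → T t = true

/-- A tree (coded by a characteristic function) is ill-founded if it has an infinite branch. -/
def IllFounded (T : List ℕ → Bool) : Prop :=
  ∃ f : ℕ → ℕ, ∀ n : ℕ, T (List.ofFn fun i : Fin n => f i) = true

/-- The set of (characteristic functions of) trees. -/
def Trees : Set (List ℕ → Bool) := {T | IsTree T}

/-- The set of ill-founded trees. -/
def IFT : Set (List ℕ → Bool) := {T | IsTree T ∧ IllFounded T}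

/-!
`IFT` is the projection of the closed set of pairs (tree, branch), hence analytic.
If `A = range g` with `g : (ℕ → ℕ) → X` continuous, let `T x` consist of those `s` with
`x ∈ closure (g '' [s])`, where `[s]` is the set of sequences extending `s`. A branch `b` of
`T x` makes `x` a cluster point of `g` along the neighbourhoods of `b`, so `x = g b`; hence
`x ∈ A ↔ T x ∈ IFT`. Reading `x` only up to the length of `s` turns this into a continuous
family of trees `codedTree a x`, indexed by codes `a` in a Polish space, of which every analytic
subset of `ℕ → ℕ` is a section. If `IFT` were Borel, then so would be the diagonal set
`{x | codedTree (e x) x ∉ IFT}` for a continuous surjection `e` of `ℕ → ℕ` onto the codes,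
and as a section itself it would contradict Cantor's diagonal argument.
-/

open MeasureTheory Set Filter Topology PiNat

section InitialSegments

variable {α : Type*}

def initSeg (y : ℕ → α) (n : ℕ) : List α := List.ofFn fun i : Fin n => y i

@[simp]
theorem length_initSeg (y : ℕ → α) (n : ℕ) : (initSeg y n).length = n := by
  simp [initSeg]

theorem initSeg_eq_initSeg_iff {x y : ℕ → α} {n : ℕ} :
    initSeg y n = initSeg x n ↔ y ∈ cylinder x n := by
  simp [initSeg, List.ofFn_inj, funext_iff, Fin.forall_iff]

theorem List.IsPrefix.eq_initSeg {y : ℕ → α} {n : ℕ} {t : List α} (h : t <+: initSeg y n) :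
    t = initSeg y t.length := by
  refine List.ext_getElem (by simp) fun i hi _ => ?_
  rw [h.getElem hi]
  simp [initSeg]

theorem illFounded_iff (T : List ℕ → Bool) :
    IllFounded T ↔ ∃ f, ∀ n, T (initSeg f n) = true :=
  Iff.rfl

theorem not_illFounded_const_false : ¬ IllFounded fun _ => false := by
  rintro ⟨f, hf⟩
  exact Bool.false_ne_true (hf 0)

end InitialSegments

section Cylinders

variable {E : ℕ → Type*} [∀ n, TopologicalSpace (E n)] [∀ n, DiscreteTopology (E n)]

theorem nhds_hasBasis_cylinder (x : ∀ n, E n) :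
    (𝓝 x).HasBasis (fun _ => True) (cylinder x) := by
  refine ⟨fun W => ⟨fun hW => ?_, fun ⟨n, _, hn⟩ =>
    mem_of_superset ((isOpen_cylinder E x n).mem_nhds (self_mem_cylinder x n)) hn⟩⟩
  obtain ⟨V, hVW, hV, hxV⟩ := mem_nhds_iff.mp hW
  obtain ⟨_, ⟨z, n, rfl⟩, hxz, hzV⟩ :=
    (isTopologicalBasis_cylinders E).exists_subset_of_mem_open hxV hV
  exact ⟨n, trivial, (mem_cylinder_iff_eq.mp hxz).symm ▸ hzV.trans hVW⟩

theorem eq_of_forall_mem_closure_image_cylinder {X : Type*} [TopologicalSpace X] [T2Space X]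
    {g : (∀ n, E n) → X} (hg : Continuous g) {b : ∀ n, E n} {x : X}
    (h : ∀ n, x ∈ closure (g '' cylinder b n)) : g b = x := by
  have hcluster : ClusterPt x (map g (𝓝 b)) :=
    clusterPt_iff_forall_mem_closure.mpr fun s hs => by
      obtain ⟨n, -, hn⟩ := ((nhds_hasBasis_cylinder b).map g).mem_iff.mp hs
      exact closure_mono hn (h n)
  exact (eq_of_nhds_neBot (hcluster.mono (hg.tendsto b))).symm

end Cylinders

/- Instance search fails to derive these from `SeparableSpace` and `IsCompletelyMetrizableSpace`
for spaces such as `List ℕ → Bool` or `(ℕ → Bool) × (ℕ → ℕ)`. -/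
instance PolishSpace.pi_countable {ι : Type*} [Countable ι] {E : ι → Type*}
    [∀ i, TopologicalSpace (E i)] [∀ i, PolishSpace (E i)] : PolishSpace (∀ i, E i) :=
  instPolishSpaceOfSeparableSpaceOfIsCompletelyMetrizableSpace

instance PolishSpace.prod {α β : Type*} [TopologicalSpace α] [TopologicalSpace β]
    [PolishSpace α] [PolishSpace β] : PolishSpace (α × β) :=
  instPolishSpaceOfSeparableSpaceOfIsCompletelyMetrizableSpace

theorem continuous_apply_initSeg {α Y : Type*} [TopologicalSpace α] [DiscreteTopology α]
    [TopologicalSpace Y] (n : ℕ) :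
    Continuous fun p : (List α → Y) × (ℕ → α) => p.1 (initSeg p.2 n) := by
  have hev : Continuous fun q : (List α → Y) × (Fin n → α) => q.1 (List.ofFn q.2) :=
    continuous_prod_of_discrete_right.mpr fun v => continuous_apply (List.ofFn v)
  exact hev.comp <| continuous_fst.prodMk <|
    continuous_pi fun i => (continuous_apply _).comp continuous_snd

theorem isClosed_trees : IsClosed Trees := by
  simp only [Trees, IsTree, ofPred_forall]
  refine isClosed_iInter fun s => isClosed_iInter fun t => isClosed_imp ?_ ?_
  · exact ((isClopen_discrete {true}).preimage (continuous_apply (A := fun _ => Bool) s)).isOpen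
  · by_cases h : t <+: s
    · simpa [h] using isClosed_eq (continuous_apply t) (continuous_const (y := true))
    · simp [h]

theorem mem_IFT_iff {T : List ℕ → Bool} (hT : T ∈ Trees) :
    T ∈ IFT ↔ ∃ f, ∀ n, T (initSeg f n) = true :=
  and_iff_right hT

theorem analyticSet_IFT : AnalyticSet IFT := by
  let branches : Set ((List ℕ → Bool) × (ℕ → ℕ)) :=
    {p | p.1 ∈ Trees} ∩ ⋂ n, {p | p.1 (initSeg p.2 n) = true}
  have hclosed : IsClosed branches :=
    (isClosed_trees.preimage continuous_fst).inter <| isClosed_iInter fun n =>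
      isClosed_eq (continuous_apply_initSeg n) continuous_const
  have himage : Prod.fst '' branches = IFT := by
    ext T
    simp [branches, IFT, Trees, illFounded_iff]
  exact himage ▸ hclosed.analyticSet.image_of_continuous continuous_fst

section Reduction

variable {X : Type*} [TopologicalSpace X]

open Classical in
noncomputable def closureTree (g : (ℕ → ℕ) → X) (x : X) : List ℕ → Bool :=
  fun s => decide (x ∈ closure (g '' {y | initSeg y s.length = s}))

theorem closureTree_mem_trees (g : (ℕ → ℕ) → X) (x : X) : closureTree g x ∈ Trees := by
  intro s t hs hts
  simp only [closureTree, decide_eq_true_eq] at hs ⊢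
  refine closure_mono (image_mono fun y hy => ?_) hs
  rw [← hy] at hts
  exact hts.eq_initSeg.symm

theorem measurable_closureTree [MeasurableSpace X] [OpensMeasurableSpace X]
    (g : (ℕ → ℕ) → X) : Measurable (closureTree g) :=
  measurable_pi_lambda _ fun s => measurable_to_bool <| by
    simpa [closureTree, preimage] using
      (isClosed_closure (s := g '' {y | initSeg y s.length = s})).measurableSet

theorem closureTree_mem_IFT_iff [T2Space X] {g : (ℕ → ℕ) → X} (hg : Continuous g) (x : X) :
    closureTree g x ∈ IFT ↔ x ∈ range g := by
  have hbranch (b : ℕ → ℕ) (n : ℕ) :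
      closureTree g x (initSeg b n) = true ↔ x ∈ closure (g '' cylinder b n) := by
    simp only [closureTree, length_initSeg, initSeg_eq_initSeg_iff, ofPred_mem_eq,
      decide_eq_true_eq]
  simp only [mem_IFT_iff (closureTree_mem_trees g x), hbranch]
  refine ⟨fun ⟨b, hb⟩ => ⟨b, eq_of_forall_mem_closure_image_cylinder hg hb⟩, ?_⟩
  rintro ⟨b, rfl⟩
  exact ⟨b, fun n => subset_closure (mem_image_of_mem g (self_mem_cylinder b n))⟩

theorem exists_measurable_reduction_to_IFT [T2Space X] [MeasurableSpace X]
    [OpensMeasurableSpace X] {A : Set X} (hA : AnalyticSet A) :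
    ∃ f : X → List ℕ → Bool, Measurable f ∧ (∀ x, f x ∈ Trees) ∧
      ∀ x, x ∈ A ↔ f x ∈ IFT := by
  obtain rfl | ⟨g, hg, rfl⟩ := (AnalyticSet_def A).mp hA
  · exact ⟨fun _ _ => false, measurable_const, fun _ _ _ h => absurd h Bool.false_ne_true,
      fun _ => iff_of_false (notMem_empty _) fun h => not_illFounded_const_false h.2⟩
  · exact ⟨closureTree g, measurable_closureTree g, closureTree_mem_trees g,
      fun x => (closureTree_mem_IFT_iff hg x).symm⟩

end Reduction

theorem not_measurableSet_of_forall_measurableSet_eq_section {C Y : Type*} [MeasurableSpace C]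
    [MeasurableSpace Y] {U : Set (C × Y)} {e : Y → C} (he : Measurable e)
    (he_surj : Function.Surjective e)
    (hU : ∀ D : Set Y, MeasurableSet D → ∃ a, ∀ y, y ∈ D ↔ (a, y) ∈ U) :
    ¬ MeasurableSet U := by
  intro hUm
  obtain ⟨a, ha⟩ := hU {y | (e y, y) ∉ U} ((he.prodMk measurable_id) hUm).compl
  obtain ⟨y, rfl⟩ := he_surj a
  exact not_iff_self (ha y)

/- A code `a` describes the trees of all `x` at once: `a u s` decides whether `s` belongs to the
tree of those `x` that begin with `u`. -/
def codedTree (a : List ℕ → List ℕ → Bool) (x : ℕ → ℕ) : List ℕ → Bool :=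
  fun s => a (initSeg x s.length) s

theorem continuous_codedTree :
    Continuous fun p : (List ℕ → List ℕ → Bool) × (ℕ → ℕ) => codedTree p.1 p.2 :=
  continuous_pi fun s => (continuous_apply s).comp (continuous_apply_initSeg s.length)

open Classical in
noncomputable def rangeCode (g : (ℕ → ℕ) → ℕ → ℕ) : List ℕ → List ℕ → Bool :=
  fun u s => decide (∃ y, initSeg y s.length = s ∧ initSeg (g y) s.length = u)

theorem codedTree_rangeCode_mem_trees (g : (ℕ → ℕ) → ℕ → ℕ) (x : ℕ → ℕ) :
    codedTree (rangeCode g) x ∈ Trees := by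
  intro s t hs hts
  simp only [codedTree, rangeCode, decide_eq_true_eq, initSeg_eq_initSeg_iff] at hs ⊢
  obtain ⟨y, hy, hgy⟩ := hs
  rw [← hy] at hts
  exact ⟨y, hts.eq_initSeg.symm, cylinder_anti x (by simpa using hts.length_le) hgy⟩

theorem codedTree_rangeCode_mem_IFT_iff {g : (ℕ → ℕ) → ℕ → ℕ} (hg : Continuous g)
    (x : ℕ → ℕ) :
    codedTree (rangeCode g) x ∈ IFT ↔ x ∈ range g := by
  have hbranch (b : ℕ → ℕ) (n : ℕ) : codedTree (rangeCode g) x (initSeg b n) = true ↔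
      ∃ y ∈ cylinder b n, g y ∈ cylinder x n := by
    simp only [codedTree, rangeCode, length_initSeg, initSeg_eq_initSeg_iff, decide_eq_true_eq]
  simp only [mem_IFT_iff (codedTree_rangeCode_mem_trees g x), hbranch]
  constructor
  · rintro ⟨b, hb⟩
    refine ⟨b, eq_of_forall_mem_closure_image_cylinder hg fun n =>
      (mem_closure_iff_nhds_basis (nhds_hasBasis_cylinder x)).mpr fun m _ => ?_⟩
    obtain ⟨y, hy, hgy⟩ := hb (max m n)
    exact ⟨g y, mem_image_of_mem g (cylinder_anti b (le_max_right m n) hy),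
      cylinder_anti x (le_max_left m n) hgy⟩
  · rintro ⟨b, rfl⟩
    exact ⟨b, fun n => ⟨b, self_mem_cylinder b n, self_mem_cylinder (g b) n⟩⟩

theorem exists_codedTree_mem_IFT_iff {A : Set (ℕ → ℕ)} (hA : AnalyticSet A) :
    ∃ a, ∀ x, x ∈ A ↔ codedTree a x ∈ IFT := by
  obtain rfl | ⟨g, hg, rfl⟩ := (AnalyticSet_def A).mp hA
  · exact ⟨fun _ _ => false, fun _ => iff_of_false (notMem_empty _) fun h =>
      not_illFounded_const_false h.2⟩
  · exact ⟨rangeCode g, fun x => (codedTree_rangeCode_mem_IFT_iff hg x).symm⟩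

theorem not_measurableSet_IFT : ¬ MeasurableSet IFT := by
  intro hIFT
  obtain ⟨e, he, he_surj⟩ :=
    PolishSpace.exists_nat_nat_continuous_surjective (List ℕ → List ℕ → Bool)
  exact not_measurableSet_of_forall_measurableSet_eq_section he.measurable he_surj
    (fun D hD => exists_codedTree_mem_IFT_iff hD.analyticSet)
    (continuous_codedTree.measurable hIFT)

/-- The set of ill-founded trees is a complete analytic set: it is analytic, every analytic
subset of a Polish space Borel-reduces to it (via a map taking values in the trees), and it
is not Borel. -/
theorem IFT_complete_analytic :
    MeasureTheory.AnalyticSet IFT ∧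
    (∀ (X : Type) [TopologicalSpace X] [PolishSpace X] [MeasurableSpace X] [BorelSpace X]
      (A : Set X), MeasureTheory.AnalyticSet A →
      ∃ f : X → (List ℕ → Bool), Measurable f ∧ (∀ x, f x ∈ Trees) ∧
        ∀ x : X, x ∈ A ↔ f x ∈ IFT) ∧
    ¬ MeasurableSet IFT :=
  ⟨analyticSet_IFT, fun _ _ _ _ _ _ hA => exists_measurable_reduction_to_IFT hA,
    not_measurableSet_IFT⟩
end

section
/- Let (X, d) be a compact metric space. The set of non-distal homeomorphism pairs N = {(f, g) ∈ C(X,X) × C(X,X) : g ∘ f = id ∧ f ∘ g = id ∧ ∃ x ≠ y such that for every q ∈ ℕ there exists n ∈ ℕ with d(f^[n] x, f^[n] y) ≤ 1/(q+1) or d(g^[n] x, g^[n] y) ≤ 1/(q+1)} is an analytic subset of C(X,X) × C(X,X). Consequently, within the closed set P of mutually inverse pairs (the Polish space of homeomorphisms of X), the set of distal homeomorphisms is co-analytic. -/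
/-!
A non-distal pair `(f, g)` is witnessed by a proximal pair `x ≠ y`, so the non-distal set is the
projection to `C(X, X) × C(X, X)` of the set of `((f, g), x, y)` with `f`, `g` mutually inverse,
`x ≠ y` and `x`, `y` proximal. In the Polish space `(C(X, X) × C(X, X)) × X × X` this set is the
intersection of a closed set, an open set and a countable intersection of countable unions of
closed sets, hence analytic, and continuous images of analytic sets are analytic. Among mutually
inverse pairs, being non-distal is exactly the negation of being distal.
-/

open MeasureTheory Set

theorem MeasureTheory.AnalyticSet.inter {α : Type*} [TopologicalSpace α] [T2Space α]
    {s t : Set α} (hs : AnalyticSet s) (ht : AnalyticSet t) : AnalyticSet (s ∩ t) := by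
  rw [inter_eq_iInter]
  exact AnalyticSet.iInter fun b => by cases b <;> assumption

theorem IsOpen.analyticSet {α : Type*} [TopologicalSpace α] [PolishSpace α] {s : Set α}
    (hs : IsOpen s) : AnalyticSet s := by
  simpa using hs.analyticSet_image continuous_id

namespace ContinuousMap

variable {X Y : Type*} [TopologicalSpace X] [TopologicalSpace Y]

theorem continuous_iterate_eval [LocallyCompactSpace X] (n : ℕ) :
    Continuous fun p : C(X, X) × X => (⇑p.1)^[n] p.2 := by
  induction n with
  | zero => exact continuous_snd
  | succ n ih =>
    simp only [Function.iterate_succ_apply']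
    exact continuous_eval.comp (continuous_fst.prodMk ih)

theorem isClosed_setOf_comp_eq_id [T2Space X] [LocallyCompactSpace Y] :
    IsClosed {p : C(X, Y) × C(Y, X) | ⇑p.2 ∘ ⇑p.1 = id} := by
  simp only [funext_iff, Function.comp_apply, id_eq, ofPred_forall]
  exact isClosed_iInter fun x => isClosed_eq
    (continuous_eval.comp (continuous_snd.prodMk ((continuous_eval_const x).comp continuous_fst)))
    continuous_const

theorem isClosed_setOf_mutuallyInverse [T2Space X] [LocallyCompactSpace X] [T2Space Y]
    [LocallyCompactSpace Y] :
    IsClosed {p : C(X, Y) × C(Y, X) | ⇑p.2 ∘ ⇑p.1 = id ∧ ⇑p.1 ∘ ⇑p.2 = id} :=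
  isClosed_setOf_comp_eq_id.inter (isClosed_setOf_comp_eq_id.preimage continuous_swap)

end ContinuousMap

section Proximal

variable {X : Type*}

/-- With `g = f⁻¹`, this says `inf_{n ∈ ℤ} dist (fⁿ x) (fⁿ y) = 0`. -/
def TwoSidedProximal [PseudoMetricSpace X] (f g : X → X) (x y : X) : Prop :=
  ∀ q : ℕ, ∃ n : ℕ,
    dist (f^[n] x) (f^[n] y) ≤ 1 / (q + 1) ∨ dist (g^[n] x) (g^[n] y) ≤ 1 / (q + 1)

theorem not_twoSidedProximal_iff [PseudoMetricSpace X] {f g : X → X} {x y : X} :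
    ¬ TwoSidedProximal f g x y ↔ ∃ q : ℕ, ∀ n : ℕ,
      dist (f^[n] x) (f^[n] y) > 1 / (q + 1) ∧ dist (g^[n] x) (g^[n] y) > 1 / (q + 1) := by
  simp only [TwoSidedProximal, not_forall, not_exists, not_or, not_le, gt_iff_lt]

theorem isClosed_setOf_dist_iterate_le [PseudoMetricSpace X] [LocallyCompactSpace X]
    (n : ℕ) (c : ℝ) :
    IsClosed {w : C(X, X) × X × X | dist ((⇑w.1)^[n] w.2.1) ((⇑w.1)^[n] w.2.2) ≤ c} :=
  isClosed_le
    (((ContinuousMap.continuous_iterate_eval n).comp (continuous_fst.prodMk continuous_snd.fst)).dist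
      ((ContinuousMap.continuous_iterate_eval n).comp (continuous_fst.prodMk continuous_snd.snd)))
    continuous_const

variable [MetricSpace X] [CompactSpace X]

theorem analyticSet_setOf_twoSidedProximal :
    AnalyticSet {z : (C(X, X) × C(X, X)) × X × X | TwoSidedProximal z.1.1 z.1.2 z.2.1 z.2.2} := by
  -- without this cached instance, search for `PolishSpace` of the product times out
  have : PolishSpace C(X, X) := inferInstance
  simp only [TwoSidedProximal, ofPred_forall, ofPred_exists, ofPred_or]
  refine AnalyticSet.iInter fun q => AnalyticSet.iUnion fun n => ?_
  exact ((isClosed_setOf_dist_iterate_le n _).preimage (continuous_fst.fst.prodMk continuous_snd)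
    |>.union <| (isClosed_setOf_dist_iterate_le n _).preimage
      (continuous_fst.snd.prodMk continuous_snd)).analyticSet

theorem analyticSet_setOf_nondistal :
    AnalyticSet {p : C(X, X) × C(X, X) | ⇑p.2 ∘ ⇑p.1 = id ∧ ⇑p.1 ∘ ⇑p.2 = id ∧
      ∃ x y : X, x ≠ y ∧ TwoSidedProximal p.1 p.2 x y} := by
  have : PolishSpace C(X, X) := inferInstance
  have hne : IsOpen {z : (C(X, X) × C(X, X)) × X × X | z.2.1 ≠ z.2.2} :=
    isOpen_ne_fun continuous_snd.fst continuous_snd.snd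
  have himage : {p : C(X, X) × C(X, X) | ⇑p.2 ∘ ⇑p.1 = id ∧ ⇑p.1 ∘ ⇑p.2 = id ∧
      ∃ x y : X, x ≠ y ∧ TwoSidedProximal p.1 p.2 x y} = Prod.fst ''
        ((Prod.fst ⁻¹' {p : C(X, X) × C(X, X) | ⇑p.2 ∘ ⇑p.1 = id ∧ ⇑p.1 ∘ ⇑p.2 = id} ∩
          {z : (C(X, X) × C(X, X)) × X × X | z.2.1 ≠ z.2.2}) ∩
          {z | TwoSidedProximal z.1.1 z.1.2 z.2.1 z.2.2}) := by
    ext p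
    constructor
    · rintro ⟨hleft, hright, x, y, hxy, hprox⟩
      exact ⟨(p, x, y), ⟨⟨⟨hleft, hright⟩, hxy⟩, hprox⟩, rfl⟩
    · rintro ⟨⟨p, x, y⟩, ⟨⟨⟨hleft, hright⟩, hxy⟩, hprox⟩, rfl⟩
      exact ⟨hleft, hright, x, y, hxy, hprox⟩
  rw [himage]
  exact ((ContinuousMap.isClosed_setOf_mutuallyInverse.preimage continuous_fst).analyticSet.inter
    hne.analyticSet).inter analyticSet_setOf_twoSidedProximal |>.image_of_continuous continuous_fst

end Proximal

/-- For a compact metric space `X`, the set of non-distal homeomorphism pairs (pairs of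
mutually inverse continuous maps admitting a proximal pair of distinct points) is analytic
in `C(X,X) × C(X,X)`; consequently, within the closed set of mutually inverse pairs (the
Polish space of homeomorphisms of `X`), the set of distal homeomorphisms is co-analytic
(its complement there is analytic). -/
theorem nondistal_analytic_distal_coanalytic
    (X : Type) [MetricSpace X] [CompactSpace X] :
    MeasureTheory.AnalyticSet
      {p : C(X, X) × C(X, X) |
        (⇑p.2 ∘ ⇑p.1 = id) ∧ (⇑p.1 ∘ ⇑p.2 = id) ∧
        ∃ x y : X, x ≠ y ∧ ∀ q : ℕ, ∃ n : ℕ,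
          dist ((⇑p.1)^[n] x) ((⇑p.1)^[n] y) ≤ 1 / (q + 1) ∨
          dist ((⇑p.2)^[n] x) ((⇑p.2)^[n] y) ≤ 1 / (q + 1)} ∧
    MeasureTheory.AnalyticSet
      ({p : C(X, X) × C(X, X) | (⇑p.2 ∘ ⇑p.1 = id) ∧ (⇑p.1 ∘ ⇑p.2 = id)} \
        {p : C(X, X) × C(X, X) |
          (⇑p.2 ∘ ⇑p.1 = id) ∧ (⇑p.1 ∘ ⇑p.2 = id) ∧
          ∀ x y : X, x ≠ y → ∃ q : ℕ, ∀ n : ℕ,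
            dist ((⇑p.1)^[n] x) ((⇑p.1)^[n] y) > 1 / (q + 1) ∧
            dist ((⇑p.2)^[n] x) ((⇑p.2)^[n] y) > 1 / (q + 1)}) := by
  refine ⟨analyticSet_setOf_nondistal, ?_⟩
  convert analyticSet_setOf_nondistal (X := X) using 1
  ext p
  simp only [← not_twoSidedProximal_iff, mem_sdiff, mem_ofPred_eq]
  grind
end

section
/- Let X be a compact metric space and m ∈ ℕ. The set 𝒰ₘ = {f ∈ C(X,X) : the fixed-point set {x ∈ X : f x = x} is finite with exactly m elements} is a Borel subset of C(X,X). -/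
open MeasureTheory

/-- Existence of an injection from `Fin k` into `S` is equivalent to `S` having a finite
subset of cardinality `k`. -/
lemma aux_inj_iff {X : Type} (S : Set X) (k : ℕ) :
    (∃ x : Fin k → X, Function.Injective x ∧ ∀ i, x i ∈ S) ↔
      ∃ t ⊆ S, t.Finite ∧ t.ncard = k := by
  constructor
  · rintro ⟨x, hinj, hmem⟩
    refine ⟨Set.range x, Set.range_subset_iff.2 hmem, Set.finite_range x, ?_⟩
    rw [← Set.image_univ, Set.ncard_image_of_injective _ hinj, Set.ncard_univ]
    simp
  · rintro ⟨t, hts, htf, htc⟩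
    haveI := htf.fintype
    have hcard : Fintype.card t = k := by
      rw [← Nat.card_coe_set_eq, Nat.card_eq_fintype_card] at htc; exact htc
    let e : Fin k ≃ t := (Fintype.equivFinOfCardEq hcard).symm
    exact ⟨fun i => (e i : X), Subtype.val_injective.comp e.injective,
      fun i => hts (e i).2⟩

/-- An injection from `Fin k` into `S` exists iff there is a uniformly separated
`k`-tuple in `S`. -/
lemma aux_sep_iff {X : Type} [MetricSpace X] (S : Set X) (k : ℕ) :
    (∃ x : Fin k → X, Function.Injective x ∧ ∀ i, x i ∈ S) ↔
      ∃ n : ℕ, ∃ x : Fin k → X, (∀ i, x i ∈ S) ∧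
        ∀ i j, i ≠ j → 1 / (n + 1 : ℝ) ≤ dist (x i) (x j) := by
  constructor
  · rintro ⟨x, hinj, hmem⟩
    set P : Finset (Fin k × Fin k) := Finset.univ.filter (fun p => p.1 ≠ p.2) with hP
    by_cases hPne : P.Nonempty
    · set δ : ℝ := P.inf' hPne (fun p => dist (x p.1) (x p.2)) with hδ
      have hδpos : 0 < δ := by
        rw [hδ, Finset.lt_inf'_iff]
        intro p hp
        rw [dist_pos]
        intro h
        exact (Finset.mem_filter.1 hp).2 (hinj h)
      obtain ⟨n, hn⟩ := exists_nat_one_div_lt hδpos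
      refine ⟨n, x, hmem, fun i j hij => ?_⟩
      have hmemP : (i, j) ∈ P := by simp [hP, hij]
      exact le_trans hn.le (Finset.inf'_le _ hmemP)
    · refine ⟨0, x, hmem, fun i j hij => absurd ?_ hPne⟩
      exact ⟨(i, j), by simp [hP, hij]⟩
  · rintro ⟨n, x, hmem, hsep⟩
    refine ⟨x, fun i j h => ?_, hmem⟩
    by_contra hij
    have := hsep i j hij
    rw [h] at this
    simp only [dist_self] at this
    have : (0 : ℝ) < 1 / (n + 1 : ℝ) := by positivity
    linarith [hsep i j hij, dist_self (x j)]

/-- `S` is finite with exactly `m` elements iff it admits an injection from `Fin m`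
but not from `Fin (m+1)`. -/
lemma aux_card_iff {X : Type} (S : Set X) (m : ℕ) :
    (S.Finite ∧ S.ncard = m) ↔
      (∃ t ⊆ S, t.Finite ∧ t.ncard = m) ∧ ¬(∃ t ⊆ S, t.Finite ∧ t.ncard = m + 1) := by
  constructor
  · rintro ⟨hfin, hcard⟩
    refine ⟨⟨S, subset_rfl, hfin, hcard⟩, ?_⟩
    rintro ⟨t, hts, htf, htc⟩
    have := Set.ncard_le_ncard hts hfin
    omega
  · rintro ⟨⟨t, hts, htf, htc⟩, hnot⟩
    have hfin : S.Finite := by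
      by_contra hinf
      obtain ⟨t', ht's, ht'f, ht'c⟩ := Set.Infinite.exists_subset_ncard_eq hinf (m + 1)
      exact hnot ⟨t', ht's, ht'f, ht'c⟩
    have hge : m ≤ S.ncard := htc ▸ Set.ncard_le_ncard hts hfin
    have hle : S.ncard ≤ m := by
      by_contra hlt
      push_neg at hlt
      obtain ⟨t', ht's, ht'c⟩ := Set.exists_subset_card_eq (show m + 1 ≤ S.ncard by omega)
      exact hnot ⟨t', ht's, hfin.subset ht's, ht'c⟩
    exact ⟨hfin, le_antisymm hle hge⟩

/-- For a compact metric space `X` and `m : ℕ`, the set of continuous self-maps of `X`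
whose fixed-point set is finite with exactly `m` elements is Borel in `C(X,X)`. -/
theorem finitely_many_fixed_points_borel
    (X : Type) [MetricSpace X] [CompactSpace X] (m : ℕ) :
    MeasurableSet[borel C(X, X)]
      {f : C(X, X) | {x : X | f x = x}.Finite ∧ {x : X | f x = x}.ncard = m} := by
  letI : MeasurableSpace C(X, X) := borel C(X, X)
  haveI : BorelSpace C(X, X) := ⟨rfl⟩
  have key : ∀ k : ℕ, MeasurableSet
      {f : C(X, X) | ∃ x : Fin k → X, Function.Injective x ∧ ∀ i, f (x i) = x i} := by
    intro k
    have heq : {f : C(X, X) | ∃ x : Fin k → X, Function.Injective x ∧ ∀ i, f (x i) = x i}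
        = ⋃ n : ℕ, Prod.snd '' {p : (Fin k → X) × C(X, X) |
            (∀ i, p.2 (p.1 i) = p.1 i) ∧
            ∀ i j, i ≠ j → 1 / (n + 1 : ℝ) ≤ dist (p.1 i) (p.1 j)} := by
      ext f
      simp only [Set.mem_setOf_eq, Set.mem_iUnion, Set.mem_image, Prod.exists]
      have hiff := aux_sep_iff {x : X | f x = x} k
      simp only [Set.mem_setOf_eq] at hiff
      rw [hiff]
      constructor
      · rintro ⟨n, x, hmem, hsep⟩
        exact ⟨n, x, f, ⟨⟨hmem, hsep⟩, rfl⟩⟩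
      · rintro ⟨n, x, g, ⟨⟨hmem, hsep⟩, rfl⟩⟩
        exact ⟨n, x, hmem, hsep⟩
    rw [heq]
    refine MeasurableSet.iUnion fun n => ?_
    refine (isClosedMap_snd_of_compactSpace _ ?_).measurableSet
    have h1 : IsClosed {p : (Fin k → X) × C(X, X) | ∀ i, p.2 (p.1 i) = p.1 i} := by
      simp_rw [Set.setOf_forall]
      refine isClosed_iInter fun i => isClosed_eq ?_ ((continuous_apply i).comp continuous_fst)
      exact ContinuousEval.continuous_eval.comp
        (continuous_snd.prodMk ((continuous_apply i).comp continuous_fst))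
    have h2 : IsClosed {p : (Fin k → X) × C(X, X) |
        ∀ i j, i ≠ j → 1 / (n + 1 : ℝ) ≤ dist (p.1 i) (p.1 j)} := by
      simp_rw [Set.setOf_forall]
      refine isClosed_iInter fun i => isClosed_iInter fun j => ?_
      by_cases hij : i = j
      · simp [hij]
      · simp only [hij, ne_eq, not_false_iff, forall_true_left, Set.iInter_const]
        have hc : Continuous fun p : (Fin k → X) × C(X, X) => dist (p.1 i) (p.1 j) := by
          fun_prop
        exact isClosed_le continuous_const hc
    exact h1.inter h2
  have hmain : {f : C(X, X) | {x : X | f x = x}.Finite ∧ {x : X | f x = x}.ncard = m}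
      = {f : C(X, X) | ∃ x : Fin m → X, Function.Injective x ∧ ∀ i, f (x i) = x i} \
        {f : C(X, X) | ∃ x : Fin (m + 1) → X, Function.Injective x ∧ ∀ i, f (x i) = x i} := by
    ext f
    simp only [Set.mem_setOf_eq, Set.mem_diff]
    rw [aux_card_iff {x : X | f x = x} m]
    rw [← aux_inj_iff {x : X | f x = x} m, ← aux_inj_iff {x : X | f x = x} (m + 1)]
    rfl
  rw [hmain]
  exact (key m).diff (key (m + 1))
end

section
/- Let X be a compact metric space and m, n ∈ ℕ with n ≥ 1. The set 𝒰ₘⁿ = {f ∈ C(X,X) : Perₙ(f) is finite with exactly m elements} is a Borel subset of C(X,X), where Perₙ(f) = {x ∈ X : f^[n] x = x and f^[k] x ≠ x for all 0 < k < n} is the set of periodic points of f of least period n. -/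
/-!
The graph `{(f, x) | x ∈ Perₙ f}` is the intersection of a closed and an open subset of the
metrizable space `C(X, X) × X`, hence `F_σ`. Having at least `k` periodic points of least period
`n` means that some injective `k`-tuple lies in the fibre of this graph, so these maps form the
projection of an `F_σ` subset of `C(X, X) × Xᵏ` along the compact factor `Xᵏ`, which is again
`F_σ`. Having exactly `m` of them is the difference of the cases `k = m` and `k = m + 1`.
`F_σ` sets are encoded as complements of `G_δ` sets.
-/

open MeasureTheory

open Set Function

theorem Set.natCast_le_encard_iff {X : Type*} {s : Set X} {k : ℕ} :
    (k : ℕ∞) ≤ s.encard ↔ ∃ x : Fin k → X, Injective x ∧ ∀ a, x a ∈ s := by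
  constructor
  · intro hk
    obtain ⟨t, hts, htk⟩ := exists_subset_encard_eq hk
    have : Finite t := finite_of_encard_eq_coe htk
    let e : Fin k ≃ t := (Finite.equivFinOfCardEq
      (by rw [Nat.card_coe_set_eq, ncard_def, htk, ENat.toNat_natCast])).symm
    exact ⟨fun a => e a, Subtype.val_injective.comp e.injective, fun a => hts (e a).2⟩
  · rintro ⟨x, hx, hxs⟩
    calc (k : ℕ∞) = (range x).encard := by
          rw [← image_univ, hx.injOn.encard_image, encard_univ, ENat.card_eq_coe_fintype_card,
            Fintype.card_fin]
      _ ≤ s.encard := encard_le_encard (range_subset_iff.2 hxs)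

theorem Set.finite_and_ncard_eq_iff_encard_eq {X : Type*} {s : Set X} {m : ℕ} :
    s.Finite ∧ s.ncard = m ↔ s.encard = m :=
  ⟨fun ⟨hs, h⟩ => h ▸ hs.cast_ncard_eq.symm,
    fun h => ⟨finite_of_encard_eq_coe h, by rw [ncard_def, h, ENat.toNat_natCast]⟩⟩

theorem ENat.eq_natCast_iff_le_and_not_succ_le {e : ℕ∞} {m : ℕ} :
    e = m ↔ (m : ℕ∞) ≤ e ∧ ¬((m + 1 : ℕ) : ℕ∞) ≤ e := by
  rw [not_le, Nat.cast_add_one, ENat.lt_add_one_iff (natCast_ne_top m), ge_antisymm_iff]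

theorem isGδ_compl_image_fst {Y K : Type*} [TopologicalSpace Y] [TopologicalSpace K]
    [CompactSpace K] {s : Set (Y × K)} (hs : IsGδ sᶜ) : IsGδ (Prod.fst '' s)ᶜ := by
  obtain ⟨T, hT_open, hT_countable, hsT⟩ := hs
  rw [← compl_compl s, hsT, compl_sInter, sUnion_image, image_iUnion₂, compl_iUnion₂]
  exact IsGδ.biInter_of_isOpen hT_countable fun t ht =>
    (isClosedMap_fst_of_compactSpace _ (hT_open t ht).isClosed_compl).isOpen_compl

theorem isClosed_setOf_not_injective {X : Type*} [TopologicalSpace X] [T2Space X] (k : ℕ) :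
    IsClosed {x : Fin k → X | ¬Injective x} := by
  have : {x : Fin k → X | ¬Injective x} = ⋃ (a) (b) (_ : a ≠ b), {x | x a = x b} := by
    ext x
    simp [Injective, and_comm]
  rw [this]
  exact isClosed_iUnion_of_finite fun a => isClosed_iUnion_of_finite fun b =>
    isClosed_iUnion_of_finite fun _ => isClosed_eq (continuous_apply a) (continuous_apply b)

section Fibres

variable {Y X : Type*} [TopologicalSpace Y] [TopologicalSpace X]
  [TopologicalSpace.MetrizableSpace Y] [TopologicalSpace.MetrizableSpace X]

theorem isGδ_compl_setOf_injective_forall_mem {G : Set (Y × X)} (hG : IsGδ Gᶜ) (k : ℕ) :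
    IsGδ {p : Y × (Fin k → X) | Injective p.2 ∧ ∀ a, (p.1, p.2 a) ∈ G}ᶜ := by
  have : {p : Y × (Fin k → X) | Injective p.2 ∧ ∀ a, (p.1, p.2 a) ∈ G}ᶜ =
      Prod.snd ⁻¹' {x | ¬Injective x} ∪ ⋃ a, (fun p => (p.1, p.2 a)) ⁻¹' Gᶜ := by
    ext p
    simp only [mem_compl_iff, mem_ofPred_eq, not_and_or, not_forall, mem_union, mem_preimage,
      mem_iUnion]
  rw [this]
  exact ((isClosed_setOf_not_injective k).preimage continuous_snd).isGδ.union
    (IsGδ.iUnion fun a => hG.preimage (by fun_prop))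

variable [CompactSpace X] [MeasurableSpace Y] [OpensMeasurableSpace Y]

theorem measurableSet_setOf_natCast_le_encard {G : Set (Y × X)} (hG : IsGδ Gᶜ) (k : ℕ) :
    MeasurableSet {y | (k : ℕ∞) ≤ {x | (y, x) ∈ G}.encard} := by
  have : {y | (k : ℕ∞) ≤ {x | (y, x) ∈ G}.encard} =
      Prod.fst '' {p : Y × (Fin k → X) | Injective p.2 ∧ ∀ a, (p.1, p.2 a) ∈ G} := by
    ext y
    simp [natCast_le_encard_iff]
  rw [this]
  exact (isGδ_compl_image_fst (isGδ_compl_setOf_injective_forall_mem hG k)).measurableSet.of_compl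

theorem measurableSet_setOf_encard_eq {G : Set (Y × X)} (hG : IsGδ Gᶜ) (m : ℕ) :
    MeasurableSet {y | {x | (y, x) ∈ G}.encard = m} := by
  simp only [ENat.eq_natCast_iff_le_and_not_succ_le, ofPred_and]
  exact (measurableSet_setOf_natCast_le_encard hG m).inter
    (measurableSet_setOf_natCast_le_encard hG (m + 1)).compl

end Fibres

theorem ContinuousMap.continuous_iterate_eval_s13 {X : Type*} [TopologicalSpace X]
    [LocallyCompactSpace X] (l : ℕ) : Continuous fun p : C(X, X) × X => (⇑p.1)^[l] p.2 := by
  induction l with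
  | zero => exact continuous_snd
  | succ l ih =>
    simp only [iterate_succ_apply']
    exact continuous_eval.comp (continuous_fst.prodMk ih)

theorem isGδ_compl_setOf_leastPeriod {X : Type*} [MetricSpace X] [CompactSpace X] (n : ℕ) :
    IsGδ {p : C(X, X) × X | (⇑p.1)^[n] p.2 = p.2 ∧
      ∀ k : ℕ, 0 < k → k < n → (⇑p.1)^[k] p.2 ≠ p.2}ᶜ := by
  have : {p : C(X, X) × X | (⇑p.1)^[n] p.2 = p.2 ∧
      ∀ k : ℕ, 0 < k → k < n → (⇑p.1)^[k] p.2 ≠ p.2}ᶜ =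
      {p : C(X, X) × X | (⇑p.1)^[n] p.2 ≠ p.2} ∪
        ⋃ k ∈ Ioo 0 n, {p : C(X, X) × X | (⇑p.1)^[k] p.2 = p.2} := by
    ext p
    simp only [mem_compl_iff, mem_ofPred_eq, not_and_or, not_forall, mem_union, mem_iUnion,
      mem_Ioo, exists_prop, not_not, and_assoc]
  rw [this]
  exact (isOpen_ne_fun (ContinuousMap.continuous_iterate_eval_s13 n) continuous_snd).isGδ.union
    (IsGδ.biUnion (finite_Ioo 0 n) fun k _ =>
      (isClosed_eq (ContinuousMap.continuous_iterate_eval_s13 k) continuous_snd).isGδ)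

theorem finitely_many_periodic_points_borel_general
    (X : Type) [MetricSpace X] [CompactSpace X] (m n : ℕ) :
    MeasurableSet[borel C(X, X)]
      {f : C(X, X) |
        {x : X | (⇑f)^[n] x = x ∧ ∀ k : ℕ, 0 < k → k < n → (⇑f)^[k] x ≠ x}.Finite ∧
        {x : X | (⇑f)^[n] x = x ∧ ∀ k : ℕ, 0 < k → k < n → (⇑f)^[k] x ≠ x}.ncard = m} := by
  borelize C(X, X)
  simpa only [finite_and_ncard_eq_iff_encard_eq, mem_ofPred_eq] using
    measurableSet_setOf_encard_eq (isGδ_compl_setOf_leastPeriod n) m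

/-- For a compact metric space `X` and `m, n : ℕ` with `n ≥ 1`, the set of continuous
self-maps of `X` having exactly `m` periodic points of least period `n` is Borel in
`C(X,X)`. -/
theorem finitely_many_periodic_points_borel
    (X : Type) [MetricSpace X] [CompactSpace X] (m n : ℕ) (hn : 1 ≤ n) :
    MeasurableSet[borel C(X, X)]
      {f : C(X, X) |
        {x : X | (⇑f)^[n] x = x ∧ ∀ k : ℕ, 0 < k → k < n → (⇑f)^[k] x ≠ x}.Finite ∧
        {x : X | (⇑f)^[n] x = x ∧ ∀ k : ℕ, 0 < k → k < n → (⇑f)^[k] x ≠ x}.ncard = m} :=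
  finitely_many_periodic_points_borel_general X m n
end

section
/- Baer's classification in complexity terms: isomorphism of nonzero subgroups of ℚ (torsion-free abelian groups of rank 1) is Borel bireducible with E₀. Precisely, let G₁ = {χ : ℚ → Bool | {q : ℚ | χ q = true} is an additive subgroup of ℚ different from {0}}, a Borel subset of the Polish space ℚ → Bool, and let ≅₁ be the relation on G₁: χ ≅₁ χ' iff the coded subgroups are isomorphic as additive groups. Then there exist a Borel measurable f : G₁ → (ℕ → Bool) with χ ≅₁ χ' ↔ f χ E₀ f χ' for all χ, χ' ∈ G₁, and a Borel measurable g : (ℕ → Bool) → G₁ with u E₀ v ↔ g u ≅₁ g v for all u, v. -/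
/-- `χ : ℚ → Bool` codes the additive subgroup `H` of `ℚ`. -/
def CodesSubgroup (χ : ℚ → Bool) (H : AddSubgroup ℚ) : Prop :=
  ∀ q : ℚ, χ q = true ↔ q ∈ H

/-- The codes of nonzero additive subgroups of `ℚ` (torsion-free abelian groups of
rank 1), a Borel subset of the Polish space `ℚ → Bool`. -/
def G1 : Set (ℚ → Bool) := {χ | ∃ H : AddSubgroup ℚ, CodesSubgroup χ H ∧ H ≠ ⊥}

/-- Isomorphism of the coded subgroups of `ℚ` as additive groups. -/
def Iso1 (χ χ' : ℚ → Bool) : Prop :=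
  ∃ H H' : AddSubgroup ℚ, CodesSubgroup χ H ∧ CodesSubgroup χ' H' ∧ Nonempty (H ≃+ H')

open Set

theorem padicValRat_prime_zpow {l p : ℕ} (hl : l.Prime) (hp : p.Prime) (e : ℤ) :
    padicValRat l ((p : ℚ) ^ e) = if l = p then e else 0 := by
  have := Fact.mk hl
  rw [padicValRat.zpow, padicValRat.of_nat]
  split_ifs with h
  · subst h; simp
  · have := Fact.mk hp
    simp [padicValNat_primes h]

theorem padicValRat_finset_prod {ι : Type*} {p : ℕ} [Fact p.Prime] (s : Finset ι) {f : ι → ℚ}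
    (hf : ∀ i ∈ s, f i ≠ 0) : padicValRat p (∏ i ∈ s, f i) = ∑ i ∈ s, padicValRat p (f i) := by
  classical
  induction s using Finset.induction_on with
  | empty => simp
  | insert a s ha ih =>
    have hs : ∀ i ∈ s, f i ≠ 0 := fun i hi => hf i (Finset.mem_insert_of_mem hi)
    rw [Finset.prod_insert ha, Finset.sum_insert ha,
      padicValRat.mul (hf a (Finset.mem_insert_self a s)) (Finset.prod_ne_zero_iff.mpr hs), ih hs]

theorem exists_padicValRat_eq (e : ℕ → ℤ) (he : {p | p.Prime ∧ e p ≠ 0}.Finite) :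
    ∃ c : ℚ, c ≠ 0 ∧ ∀ p, p.Prime → padicValRat p c = e p := by
  have hS : ∀ p ∈ he.toFinset, p.Prime := fun p hp => (he.mem_toFinset.mp hp).1
  have hne : ∀ p ∈ he.toFinset, (p : ℚ) ^ e p ≠ 0 :=
    fun p hp => zpow_ne_zero _ (Nat.cast_ne_zero.mpr (hS p hp).ne_zero)
  refine ⟨∏ p ∈ he.toFinset, (p : ℚ) ^ e p, Finset.prod_ne_zero_iff.mpr hne, fun l hl => ?_⟩
  have := Fact.mk hl
  rw [padicValRat_finset_prod _ hne,
    Finset.sum_congr rfl fun p hp => padicValRat_prime_zpow hl (hS p hp) (e p), Finset.sum_ite_eq]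
  split_ifs with h
  · rfl
  · by_contra hne
    exact h (he.mem_toFinset.mpr ⟨hl, Ne.symm hne⟩)

theorem finite_setOf_padicValRat_ne_zero {c : ℚ} (hc : c ≠ 0) :
    {p | padicValRat p c ≠ 0}.Finite := by
  have hpos : 0 < c.num.natAbs * c.den :=
    Nat.mul_pos (Int.natAbs_pos.mpr (Rat.num_ne_zero.mpr hc)) c.den_pos
  refine (finite_Iic (c.num.natAbs * c.den)).subset fun p hp => Nat.le_of_dvd hpos ?_
  by_contra hnd
  apply hp
  have hnum : ¬ (p : ℤ) ∣ c.num := fun h => hnd ((Int.natCast_dvd.mp h).mul_right _)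
  have hden : ¬ p ∣ c.den := fun h => hnd (h.mul_left _)
  rw [padicValRat_def, padicValInt.eq_zero_of_not_dvd hnum, padicValNat.eq_zero_of_not_dvd hden]
  simp

theorem not_dvd_den_of_padicValRat_nonneg {p : ℕ} (hp : p.Prime) {r : ℚ}
    (hr : 0 ≤ padicValRat p r) : ¬ p ∣ r.den := by
  intro hd
  have := Fact.mk hp
  have hnum : ¬ (p : ℤ) ∣ r.num := fun h =>
    hp.ne_one ((Nat.Coprime.coprime_dvd_left (Int.natCast_dvd.mp h) r.reduced).eq_one_of_dvd hd)
  have := one_le_padicValNat_of_dvd r.den_nz hd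
  rw [padicValRat_def, padicValInt.eq_zero_of_not_dvd hnum] at hr
  omega

namespace IsUpperSet

variable {U U' : Set ℤ}

theorem eq_univ_or_exists_eq_Ici (hU : IsUpperSet U) (hne : U.Nonempty) :
    U = univ ∨ ∃ m, U = Ici m := by
  by_cases hb : BddBelow U
  · exact Or.inr ⟨sInf U, Set.ext fun n =>
      ⟨fun hn => csInf_le hb hn, fun hn => hU hn (Int.csInf_mem hne hb)⟩⟩
  · refine Or.inl (eq_univ_of_forall fun n => ?_)
    obtain ⟨u, hu, hun⟩ := not_bddBelow_iff.mp hb n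
    exact hU hun.le hu

theorem finite_setOf_not_mem_iff_sub_mem (hU : IsUpperSet U) (d : ℤ) :
    {n | ¬(n ∈ U ↔ n - d ∈ U)}.Finite := by
  rcases U.eq_empty_or_nonempty with rfl | hne
  · simp
  obtain rfl | ⟨m, rfl⟩ := hU.eq_univ_or_exists_eq_Ici hne
  · simp
  · refine (finite_Icc (m - |d|) (m + |d|)).subset fun n hn => ?_
    simp only [mem_ofPred_eq, mem_Ici] at hn
    rcases abs_cases d with ⟨h, _⟩ | ⟨h, _⟩ <;> rw [mem_Icc, h] <;> omega

theorem eq_of_forall_neg_mem_iff (hU : IsUpperSet U) (hU' : IsUpperSet U') (h0 : 0 ∈ U)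
    (h0' : 0 ∈ U') (h : ∀ k : ℕ, -(k : ℤ) ∈ U ↔ -(k : ℤ) ∈ U') : U = U' := by
  ext n
  rcases le_or_gt 0 n with hn | hn
  · exact iff_of_true (hU hn h0) (hU' hn h0')
  · obtain ⟨k, rfl⟩ : ∃ k : ℕ, n = -k := ⟨n.natAbs, by omega⟩
    exact h k

/-- `sInf U` is a junk value when `U = univ`; the statement then holds because `U' = univ`. -/
theorem mem_iff_sub_mem_of_finite (hU : IsUpperSet U) (hU' : IsUpperSet U') (hne : U.Nonempty)
    (hne' : U'.Nonempty) (h : {k : ℕ | ¬(-(k : ℤ) ∈ U ↔ -(k : ℤ) ∈ U')}.Finite) (n : ℤ) :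
    n ∈ U' ↔ n - (sInf U' - sInf U) ∈ U := by
  obtain ⟨K, hK⟩ := h.bddAbove
  have hagree : ∀ k : ℕ, K < k → (-(k : ℤ) ∈ U ↔ -(k : ℤ) ∈ U') :=
    fun k hk => by_contra fun hk' => (hK hk').not_gt hk
  obtain rfl | ⟨m, rfl⟩ := hU.eq_univ_or_exists_eq_Ici hne <;>
    obtain rfl | ⟨m', rfl⟩ := hU'.eq_univ_or_exists_eq_Ici hne'
  · simp
  · have := hagree (K + 1 + m'.natAbs) (by omega)
    simp only [mem_univ, mem_Ici, true_iff] at this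
    omega
  · have := hagree (K + 1 + m.natAbs) (by omega)
    simp only [mem_univ, mem_Ici, iff_true] at this
    omega
  · simp only [mem_Ici, csInf_Ici]
    omega

end IsUpperSet

def padicValSet (H : AddSubgroup ℚ) (p : ℕ) : Set ℤ :=
  {n | ∃ q ∈ H, q ≠ 0 ∧ padicValRat p q ≤ n}

section padicValSet

variable {H : AddSubgroup ℚ}

theorem isUpperSet_padicValSet (p : ℕ) : IsUpperSet (padicValSet H p) :=
  fun _ _ hmn ⟨q, hq, hq0, hqm⟩ => ⟨q, hq, hq0, hqm.trans hmn⟩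

theorem padicValRat_mem_padicValSet {q : ℚ} (hq : q ∈ H) (hq0 : q ≠ 0) (p : ℕ) :
    padicValRat p q ∈ padicValSet H p :=
  ⟨q, hq, hq0, le_rfl⟩

theorem padicValSet_nonempty (hH : H ≠ ⊥) (p : ℕ) : (padicValSet H p).Nonempty := by
  obtain ⟨x, hx⟩ := AddSubgroup.ne_bot_iff_exists_ne_zero.mp hH
  exact ⟨_, padicValRat_mem_padicValSet x.2 (fun h => hx (Subtype.ext h)) p⟩

theorem finite_setOf_zero_notMem_padicValSet (hH : H ≠ ⊥) :
    {p | p.Prime ∧ 0 ∉ padicValSet H p}.Finite := by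
  obtain ⟨x, hx⟩ := AddSubgroup.ne_bot_iff_exists_ne_zero.mp hH
  have hx0 : (x : ℚ) ≠ 0 := fun h => hx (Subtype.ext h)
  refine (finite_setOf_padicValRat_ne_zero hx0).subset fun p ⟨_, hp0⟩ hv => hp0 ?_
  exact ⟨x, x.2, hx0, hv.le⟩

/-- The subgroup `{n | n • q ∈ H}` of `ℤ` contains, for every prime `p`, an integer prime to `p`
(the denominator of `q / y`), so it is all of `ℤ`. -/
theorem mem_of_forall_padicValRat_mem {q : ℚ} (hq : q ≠ 0)
    (h : ∀ p, p.Prime → padicValRat p q ∈ padicValSet H p) : q ∈ H := by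
  obtain ⟨d, hd⟩ := Int.subgroup_cyclic (H.comap (zmultiplesHom ℚ q))
  have hd_mem : d • q ∈ H := by
    have : d ∈ H.comap (zmultiplesHom ℚ q) := hd ▸ AddSubgroup.subset_closure rfl
    simpa using this
  have hcop : ∀ p, p.Prime → ¬ p ∣ d.natAbs := by
    intro p hp hpd
    have := Fact.mk hp
    obtain ⟨y, hy, hy0, hyq⟩ := h p hp
    set r := q / y
    have hr : 0 ≤ padicValRat p r := by rw [padicValRat.div hq hy0]; omega
    have hden : (r.den : ℤ) ∈ H.comap (zmultiplesHom ℚ q) := by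
      have hrq : (r.den : ℤ) • q = r.num • y := by
        have := Rat.mul_den_eq_num r
        simp only [zsmul_eq_mul, Int.cast_natCast, ← this, r]
        field_simp
      simpa [hrq] using zsmul_mem hy r.num
    rw [hd, AddSubgroup.mem_closure_singleton] at hden
    obtain ⟨k, hk⟩ := hden
    refine not_dvd_den_of_padicValRat_nonneg hp hr (Int.natCast_dvd_natCast.mp ?_)
    rw [← hk, smul_eq_mul]
    exact (Int.natCast_dvd.mpr hpd).mul_left k
  rcases Int.natAbs_eq d with h1 | h1 <;>
    rw [Nat.eq_one_iff_not_exists_prime_dvd.mpr hcop] at h1 <;> simpa [h1] using hd_mem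

theorem mem_iff_forall_padicValRat_mem {q : ℚ} (hq : q ≠ 0) :
    q ∈ H ↔ ∀ p, p.Prime → padicValRat p q ∈ padicValSet H p :=
  ⟨fun hqH p _ => padicValRat_mem_padicValSet hqH hq p, mem_of_forall_padicValRat_mem hq⟩

end padicValSet

section AddEquiv

variable {H H' : AddSubgroup ℚ}

theorem AddMonoidHom.map_mul_comm_of_addSubgroup_rat (f : H →+ ℚ) (x y : H) :
    f y * x = f x * y := by
  by_cases hx : (x : ℚ) = 0
  · obtain rfl : x = 0 := Subtype.ext hx
    simp
  set r := (y : ℚ) / x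
  have hden : (r.den : ℚ) ≠ 0 := Nat.cast_ne_zero.mpr r.den_nz
  have hyx : (r.den : ℚ) * y = r.num * x := by
    rw [← Rat.mul_den_eq_num r, mul_comm (r : ℚ), mul_assoc, div_mul_cancel₀ _ hx]
  have hf : (r.den : ℚ) * f y = r.num * f x := by
    have : ((r.den : ℤ) • y : H) = r.num • x := Subtype.ext (by simpa using hyx)
    simpa using congrArg f this
  refine mul_left_cancel₀ hden ?_
  linear_combination (x : ℚ) * hf - f x * hyx

theorem exists_mul_mem_iff_of_addEquiv (hH : H ≠ ⊥) (e : H ≃+ H') :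
    ∃ c : ℚ, c ≠ 0 ∧ ∀ q, q ∈ H ↔ c * q ∈ H' := by
  obtain ⟨x, hx⟩ := AddSubgroup.ne_bot_iff_exists_ne_zero.mp hH
  have hx0 : (x : ℚ) ≠ 0 := fun h => hx (Subtype.ext h)
  have hex0 : (e x : ℚ) ≠ 0 := fun h => hx (e.injective (Subtype.ext (by simpa using h)))
  set c := (e x : ℚ) / x
  have he : ∀ y : H, (e y : ℚ) = c * y := fun y => by
    rw [div_mul_eq_mul_div, eq_div_iff hx0]
    exact (H'.subtype.comp e.toAddMonoidHom).map_mul_comm_of_addSubgroup_rat x y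
  refine ⟨c, div_ne_zero hex0 hx0, fun q => ⟨fun hq => he ⟨q, hq⟩ ▸ (e ⟨q, hq⟩).2, fun hq => ?_⟩⟩
  have hz := he (e.symm ⟨c * q, hq⟩)
  rw [e.apply_symm_apply] at hz
  rw [mul_left_cancel₀ (div_ne_zero hex0 hx0) hz]
  exact (e.symm _).2

def addEquivOfMulMemIff {c : ℚ} (hc : c ≠ 0) (h : ∀ q, q ∈ H ↔ c * q ∈ H') : H ≃+ H' where
  toFun y := ⟨c * y, (h y).mp y.2⟩
  invFun z := ⟨z / c, (h _).mpr (by rw [mul_div_cancel₀ _ hc]; exact z.2)⟩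
  left_inv y := Subtype.ext (by field_simp)
  right_inv z := Subtype.ext (by field_simp)
  map_add' a b := Subtype.ext (by push_cast; ring)

theorem mul_mem_iff_iff_padicValSet {c : ℚ} (hc : c ≠ 0) :
    (∀ q, q ∈ H ↔ c * q ∈ H') ↔
      ∀ p, p.Prime → ∀ n, n ∈ padicValSet H' p ↔ n - padicValRat p c ∈ padicValSet H p := by
  constructor
  · intro h p hp n
    have := Fact.mk hp
    constructor
    · rintro ⟨q, hq, hq0, hqn⟩
      refine ⟨q / c, (h _).mpr (by rwa [mul_div_cancel₀ _ hc]), div_ne_zero hq0 hc, ?_⟩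
      rw [padicValRat.div hq0 hc]
      omega
    · rintro ⟨q, hq, hq0, hqn⟩
      refine ⟨c * q, (h q).mp hq, mul_ne_zero hc hq0, ?_⟩
      rw [padicValRat.mul hc hq0]
      omega
  · intro h q
    rcases eq_or_ne q 0 with rfl | hq0
    · simp only [mul_zero, zero_mem]
    rw [mem_iff_forall_padicValRat_mem hq0, mem_iff_forall_padicValRat_mem (mul_ne_zero hc hq0)]
    refine forall₂_congr fun p hp => ?_
    have := Fact.mk hp
    rw [h p hp, padicValRat.mul hc hq0, add_sub_cancel_left]

theorem nonempty_addEquiv_iff_padicValSet (hH : H ≠ ⊥) :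
    Nonempty (H ≃+ H') ↔ ∃ c : ℚ, c ≠ 0 ∧
      ∀ p, p.Prime → ∀ n, n ∈ padicValSet H' p ↔ n - padicValRat p c ∈ padicValSet H p := by
  constructor
  · rintro ⟨e⟩
    obtain ⟨c, hc, h⟩ := exists_mul_mem_iff_of_addEquiv hH e
    exact ⟨c, hc, (mul_mem_iff_iff_padicValSet hc).mp h⟩
  · rintro ⟨c, hc, h⟩
    exact ⟨addEquivOfMulMemIff hc ((mul_mem_iff_iff_padicValSet hc).mpr h)⟩

end AddEquiv

def disagreementSet (U U' : ℕ → Set ℤ) : Set (ℕ × ℕ) :=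
  {pk | pk.1.Prime ∧ ¬(-(pk.2 : ℤ) ∈ U pk.1 ↔ -(pk.2 : ℤ) ∈ U' pk.1)}

section disagreementSet

variable {U U' : ℕ → Set ℤ}

theorem finite_disagreementSet_of_shift (hU : ∀ p, IsUpperSet (U p)) {d : ℕ → ℤ}
    (hd : {p | p.Prime ∧ d p ≠ 0}.Finite) (h : ∀ p, p.Prime → ∀ n, n ∈ U' p ↔ n - d p ∈ U p) :
    (disagreementSet U U').Finite := by
  have hneg : Function.Injective fun k : ℕ => -(k : ℤ) := neg_injective.comp Nat.cast_injective
  refine (hd.biUnion fun p _ => (finite_singleton p).prod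
    (((hU p).finite_setOf_not_mem_iff_sub_mem (d p)).preimage hneg.injOn)).subset ?_
  rintro ⟨p, k⟩ ⟨hp, hk⟩
  rw [h p hp] at hk
  exact mem_biUnion ⟨hp, fun h0 => hk (by rw [h0, sub_zero])⟩ ⟨rfl, hk⟩

theorem exists_shift_of_finite_disagreementSet (hU : ∀ p, IsUpperSet (U p))
    (hU' : ∀ p, IsUpperSet (U' p)) (hne : ∀ p, (U p).Nonempty) (hne' : ∀ p, (U' p).Nonempty)
    (h0 : {p | p.Prime ∧ 0 ∉ U p}.Finite) (h0' : {p | p.Prime ∧ 0 ∉ U' p}.Finite)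
    (h : (disagreementSet U U').Finite) :
    ∃ d : ℕ → ℤ, {p | p.Prime ∧ d p ≠ 0}.Finite ∧
      ∀ p, p.Prime → ∀ n, n ∈ U' p ↔ n - d p ∈ U p := by
  refine ⟨fun p => sInf (U' p) - sInf (U p), ((h.image Prod.fst).union (h0.union h0')).subset ?_,
    fun p hp => (hU p).mem_iff_sub_mem_of_finite (hU' p) (hne p) (hne' p)
      ((h.preimage (Prod.mk_right_injective p).injOn).subset fun k hk => ⟨hp, hk⟩)⟩
  rintro p ⟨hp, hd⟩
  by_contra hp'
  simp only [mem_union, mem_image, mem_ofPred_eq, not_or, not_exists, not_and, not_not] at hp'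
  obtain ⟨hagree, hpU, hpU'⟩ := hp'
  refine hd (show sInf (U' p) - sInf (U p) = 0 from ?_)
  rw [(hU p).eq_of_forall_neg_mem_iff (hU' p) (hpU hp) (hpU' hp)
    fun k => not_not.mp fun hk => hagree (p, k) ⟨hp, hk⟩ rfl, sub_self]

end disagreementSet

theorem finite_disagreementSet_iff_nonempty_addEquiv {H H' : AddSubgroup ℚ} (hH : H ≠ ⊥)
    (hH' : H' ≠ ⊥) :
    (disagreementSet (padicValSet H) (padicValSet H')).Finite ↔ Nonempty (H ≃+ H') := by
  rw [nonempty_addEquiv_iff_padicValSet hH]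
  constructor
  · intro h
    obtain ⟨d, hd, hshift⟩ := exists_shift_of_finite_disagreementSet isUpperSet_padicValSet
      isUpperSet_padicValSet (padicValSet_nonempty hH) (padicValSet_nonempty hH')
      (finite_setOf_zero_notMem_padicValSet hH) (finite_setOf_zero_notMem_padicValSet hH') h
    obtain ⟨c, hc, hvc⟩ := exists_padicValRat_eq d hd
    exact ⟨c, hc, fun p hp => hvc p hp ▸ hshift p hp⟩
  · rintro ⟨c, hc, h⟩
    exact finite_disagreementSet_of_shift isUpperSet_padicValSet
      ((finite_setOf_padicValRat_ne_zero hc).subset fun p hp => hp.2) h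

def valSubgroup (a : ℕ → ℤ) : AddSubgroup ℚ where
  carrier := {q | q = 0 ∨ ∀ p, p.Prime → a p ≤ padicValRat p q}
  zero_mem' := Or.inl rfl
  add_mem' := by
    rintro q r (rfl | hq) (rfl | hr)
    · simp
    · simpa using Or.inr hr
    · simpa using Or.inr hq
    · refine or_iff_not_imp_left.mpr fun hqr p hp => ?_
      have := Fact.mk hp
      exact (le_min (hq p hp) (hr p hp)).trans (padicValRat.min_le_padicValRat_add hqr)
  neg_mem' := by
    rintro q (rfl | hq)
    · simp
    · exact Or.inr fun p hp => (padicValRat.neg q).symm ▸ hq p hp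

section valSubgroup

variable {a b : ℕ → ℤ}

theorem valSubgroup_ne_bot (ha : ∀ p, p.Prime → a p ≤ 0) : valSubgroup a ≠ ⊥ := by
  refine AddSubgroup.ne_bot_iff_exists_ne_zero.mpr ⟨⟨1, Or.inr fun p hp => ?_⟩, ?_⟩
  · simpa using ha p hp
  · exact fun h => one_ne_zero (congrArg Subtype.val h)

theorem padicValSet_valSubgroup (ha : ∀ p, p.Prime → a p ≤ 0) {p : ℕ} (hp : p.Prime) :
    padicValSet (valSubgroup a) p = Ici (a p) := by
  ext n
  constructor
  · rintro ⟨q, hq | hq, hq0, hqn⟩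
    · exact absurd hq hq0
    · exact (hq p hp).trans hqn
  · intro hn
    refine ⟨(p : ℚ) ^ a p, Or.inr fun l hl => ?_,
      zpow_ne_zero _ (Nat.cast_ne_zero.mpr hp.ne_zero), ?_⟩
    · rw [padicValRat_prime_zpow hl hp]
      split_ifs with h
      · rw [h]
      · exact ha l hl
    · rwa [padicValRat_prime_zpow hp hp, if_pos rfl]

theorem nonempty_addEquiv_valSubgroup_iff (ha : ∀ p, p.Prime → a p ≤ 0)
    (hb : ∀ p, p.Prime → b p ≤ 0) :
    Nonempty (valSubgroup a ≃+ valSubgroup b) ↔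
      ∃ c : ℚ, c ≠ 0 ∧ ∀ p, p.Prime → padicValRat p c = b p - a p := by
  rw [nonempty_addEquiv_iff_padicValSet (valSubgroup_ne_bot ha)]
  refine exists_congr fun c => and_congr_right fun _ => forall₂_congr fun p hp => ?_
  simp only [padicValSet_valSubgroup ha hp, padicValSet_valSubgroup hb hp, mem_Ici]
  constructor
  · intro h
    have h1 := (h (b p)).mp le_rfl
    have h2 := (h (a p + padicValRat p c)).mpr (by omega)
    omega
  · intro h n
    omega

end valSubgroup

theorem E0_iff_finite {f g : ℕ → Bool} : E0 f g ↔ {n | f n ≠ g n}.Finite := by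
  rw [← Filter.eventually_cofinite, Nat.cofinite_eq_atTop, Filter.eventually_atTop]
  rfl

/-- The subgroup of `ℚ` generated by the `1 / p` with `p` the `i`-th prime and `u i = true`. -/
def ofBits (u : ℕ → Bool) : AddSubgroup ℚ :=
  valSubgroup fun p => if u (Nat.count Nat.Prime p) then -1 else 0

theorem E0_iff_nonempty_addEquiv_ofBits (u v : ℕ → Bool) :
    E0 u v ↔ Nonempty (ofBits u ≃+ ofBits v) := by
  have hbound (w : ℕ → Bool) (p : ℕ) (_ : p.Prime) :
      (if w (Nat.count Nat.Prime p) then -1 else 0 : ℤ) ≤ 0 := by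
    split_ifs <;> norm_num
  rw [ofBits, ofBits, nonempty_addEquiv_valSubgroup_iff (hbound u) (hbound v), E0_iff_finite]
  constructor
  · intro h
    refine exists_padicValRat_eq _ ((h.image (Nat.nth Nat.Prime)).subset ?_)
    rintro p ⟨hp, hne⟩
    refine ⟨Nat.count Nat.Prime p, fun heq => hne ?_, Nat.nth_count hp⟩
    simp [heq]
  · rintro ⟨c, hc, hvc⟩
    refine ((finite_setOf_padicValRat_ne_zero hc).preimage
      (Nat.nth_injective Nat.infinite_setOfPred_prime).injOn).subset fun i hi => ?_
    simp only [mem_preimage, mem_ofPred_eq, hvc _ (Nat.prime_nth_prime i),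
      Nat.count_nth_of_infinite Nat.infinite_setOfPred_prime]
    cases hu : u i <;> cases hv : v i <;> simp_all

section Codes

variable {χ χ' : ℚ → Bool} {H H' : AddSubgroup ℚ}

theorem CodesSubgroup.eq (h : CodesSubgroup χ H) (h' : CodesSubgroup χ H') : H = H' :=
  AddSubgroup.ext fun q => (h q).symm.trans (h' q)

theorem iso1_iff (hχ : CodesSubgroup χ H) (hχ' : CodesSubgroup χ' H') :
    Iso1 χ χ' ↔ Nonempty (H ≃+ H') := by
  refine ⟨fun ⟨K, K', hK, hK', e⟩ => ?_, fun e => ⟨H, H', hχ, hχ', e⟩⟩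
  rwa [hχ.eq hK, hχ'.eq hK']

open Classical in
/-- Bit `Nat.pair p k` records whether `-k ∈ padicValSet H p` for the subgroup `H` coded by `χ`
(and is `false` unless `p` is prime). -/
noncomputable def valCode (χ : ℚ → Bool) (n : ℕ) : Bool :=
  decide ((Nat.unpair n).1.Prime ∧
    ∃ q, χ q = true ∧ q ≠ 0 ∧ padicValRat (Nat.unpair n).1 q ≤ -((Nat.unpair n).2 : ℤ))

theorem measurable_valCode : Measurable valCode := by
  refine measurable_pi_iff.mpr fun n => measurable_to_bool ?_
  simp only [valCode, preimage, mem_singleton_iff, decide_eq_true_eq]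
  exact measurableSet_setOfPred.mpr (by fun_prop)

theorem E0_valCode_iff (hχ : CodesSubgroup χ H) (hχ' : CodesSubgroup χ' H') :
    E0 (valCode χ) (valCode χ') ↔ (disagreementSet (padicValSet H) (padicValSet H')).Finite := by
  have hunpair : Function.Injective Nat.unpair :=
    Function.LeftInverse.injective (g := Function.uncurry Nat.pair) Nat.pair_unpair
  have : {n | valCode χ n ≠ valCode χ' n} =
      Nat.unpair ⁻¹' disagreementSet (padicValSet H) (padicValSet H') := by
    unfold CodesSubgroup at hχ hχ'
    ext n
    simp [valCode, disagreementSet, padicValSet, hχ, hχ']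
  rw [E0_iff_finite, this]
  exact ⟨fun h => h.of_preimage Nat.surjective_unpair, fun h => h.preimage hunpair.injOn⟩

end Codes

open Classical in
noncomputable def ofBitsCode (u : ℕ → Bool) : G1 :=
  ⟨fun q => decide (q ∈ ofBits u), ofBits u, fun _ => decide_eq_true_iff,
    valSubgroup_ne_bot fun p _ => by split_ifs <;> norm_num⟩

open Classical in
theorem codesSubgroup_ofBitsCode (u : ℕ → Bool) : CodesSubgroup (ofBitsCode u) (ofBits u) :=
  fun _ => decide_eq_true_iff

theorem measurable_ofBitsCode : Measurable ofBitsCode := by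
  refine Measurable.subtype_mk (measurable_pi_iff.mpr fun q => measurable_to_bool ?_)
  simp only [preimage, mem_singleton_iff, decide_eq_true_eq]
  refine measurableSet_setOfPred.mpr (measurable_const.or (Measurable.forall fun p =>
    measurable_const.imp ?_))
  exact (Measurable.of_discrete (f := fun b : Bool => (if b then -1 else 0 : ℤ) ≤ _)).comp
    (measurable_pi_apply (Nat.count Nat.Prime p))

/-- Baer's classification in complexity terms: isomorphism of nonzero subgroups of `ℚ`
is Borel bireducible with `E₀`. -/
theorem baer_rank_one_bireducible_E0 :
    (∃ f : G1 → (ℕ → Bool), Measurable f ∧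
      ∀ χ χ' : G1, Iso1 χ χ' ↔ E0 (f χ) (f χ')) ∧
    (∃ g : (ℕ → Bool) → G1, Measurable g ∧
      ∀ u v : ℕ → Bool, E0 u v ↔ Iso1 (g u) (g v)) := by
  refine ⟨⟨fun χ => valCode χ, measurable_valCode.comp measurable_subtype_coe, fun χ χ' => ?_⟩,
    ⟨ofBitsCode, measurable_ofBitsCode, fun u v => ?_⟩⟩
  · obtain ⟨H, hχ, hH⟩ := χ.2
    obtain ⟨H', hχ', hH'⟩ := χ'.2
    rw [iso1_iff hχ hχ', E0_valCode_iff hχ hχ', finite_disagreementSet_iff_nonempty_addEquiv hH hH']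
  · rw [iso1_iff (codesSubgroup_ofBitsCode u) (codesSubgroup_ofBitsCode v),
      E0_iff_nonempty_addEquiv_ofBits]
end
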